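/- arXiv:2509.12558 — 5 statements merged into one kernel-verified Lean document; each statement's English description precedes it below -/
import Mathlib

section
/- Let (Ω, ℱ, P) be an atomless probability space and let X₁, …, Xₙ be integrable random variables. If VaR_α(X₁ + ⋯ + Xₙ) ≤ VaR_α(X₁) + ⋯ + VaR_α(Xₙ) holds for every α ∈ (0,1), then the random vector (X₁, …, Xₙ) is comonotonic. -/
open MeasureTheory ProbabilityTheory
open scoped NNReal

open Set Filter Topology
open scoped ENNReal

set_option linter.unusedSectionVars false

/-- Value at risk: left-continuous generalized inverse of the distribution function. -/
noncomputable def VaR {Ω : Type*} [MeasurableSpace Ω] (P : Measure Ω) (X : Ω → ℝ) (α : ℝ) : ℝ :=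
  sInf {x : ℝ | α ≤ (P {ω | X ω ≤ x}).toReal}

/-- A set `A ⊆ ℝⁿ` is comonotonic. -/
def ComonotonicSet {n : ℕ} (A : Set (Fin n → ℝ)) : Prop :=
  ∀ x ∈ A, ∀ y ∈ A, (∃ i, x i < y i) → ∀ j, x j ≤ y j

/-- Topological support of a measure. -/
def measSupport {E : Type*} [TopologicalSpace E] [MeasurableSpace E] (μ : Measure E) : Set E :=
  {x | ∀ U : Set E, IsOpen U → x ∈ U → 0 < μ U}

/-- A random vector is comonotonic iff the support of its distribution is comonotonic. -/
def Comonotonic {Ω : Type*} [MeasurableSpace Ω] (P : Measure Ω) {n : ℕ}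
    (X : Fin n → Ω → ℝ) : Prop :=
  ComonotonicSet (measSupport (P.map (fun ω i => X i ω)))

/-- An atomless probability space. -/
def Atomless {Ω : Type*} [MeasurableSpace Ω] (P : Measure Ω) : Prop :=
  ∀ A : Set Ω, MeasurableSet A → 0 < P A →
    ∃ B, MeasurableSet B ∧ B ⊆ A ∧ 0 < P B ∧ P B < P A

/-- `U` is uniformly distributed on `(0,1)`. -/
def UniformOn01 {Ω : Type*} [MeasurableSpace Ω] (P : Measure Ω) (U : Ω → ℝ) : Prop :=
  P.map U = volume.restrict (Set.Ioo (0 : ℝ) 1)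

section darboux

variable {Ω : Type*} [MeasurableSpace Ω] {P : Measure Ω}

lemma atomless_half [IsFiniteMeasure P] (hP : Atomless P) {A : Set Ω} (hA : MeasurableSet A)
    (h0 : 0 < P A) : ∃ B, MeasurableSet B ∧ B ⊆ A ∧ 0 < P B ∧ P B ≤ P A / 2 := by
  obtain ⟨B, hBm, hBA, hB0, hBlt⟩ := hP A hA h0
  rcases le_or_gt (P B) (P A / 2) with h | h
  · exact ⟨B, hBm, hBA, hB0, h⟩
  · refine ⟨A \ B, hA.diff hBm, diff_subset, ?_, ?_⟩
    · rw [measure_diff hBA hBm.nullMeasurableSet (measure_ne_top P B)]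
      exact tsub_pos_of_lt hBlt
    · rw [measure_diff hBA hBm.nullMeasurableSet (measure_ne_top P B)]
      rw [tsub_le_iff_right]
      calc P A = P A / 2 + P A / 2 := (ENNReal.add_halves _).symm
        _ ≤ P A / 2 + P B := add_le_add_right h.le _

lemma atomless_pow [IsFiniteMeasure P] (hP : Atomless P) {A : Set Ω} (hA : MeasurableSet A)
    (h0 : 0 < P A) : ∀ n : ℕ, ∃ B, MeasurableSet B ∧ B ⊆ A ∧ 0 < P B ∧ P B ≤ P A * 2⁻¹ ^ n := by
  intro n
  induction n with
  | zero => exact ⟨A, hA, Subset.rfl, h0, by simp⟩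
  | succ n ih =>
    obtain ⟨B, hBm, hBA, hB0, hBle⟩ := ih
    obtain ⟨C, hCm, hCB, hC0, hCle⟩ := atomless_half hP hBm hB0
    refine ⟨C, hCm, hCB.trans hBA, hC0, ?_⟩
    calc P C ≤ P B / 2 := hCle
      _ ≤ (P A * 2⁻¹ ^ n) / 2 := by gcongr
      _ = P A * 2⁻¹ ^ (n + 1) := by
          rw [pow_succ, ENNReal.div_eq_inv_mul]; ring

lemma atomless_small [IsFiniteMeasure P] (hP : Atomless P) {A : Set Ω} (hA : MeasurableSet A)
    (h0 : 0 < P A) {ε : ℝ≥0∞} (hε : 0 < ε) :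
    ∃ B, MeasurableSet B ∧ B ⊆ A ∧ 0 < P B ∧ P B ≤ ε := by
  have hPA : P A ≠ ∞ := measure_ne_top P A
  have hdiv : ε / P A ≠ 0 := by
    simp [ENNReal.div_eq_zero_iff, hε.ne', hPA]
  obtain ⟨n, hn⟩ := ENNReal.exists_inv_two_pow_lt hdiv
  obtain ⟨B, hBm, hBA, hB0, hBle⟩ := atomless_pow hP hA h0 n
  refine ⟨B, hBm, hBA, hB0, hBle.trans ?_⟩
  have := (ENNReal.lt_div_iff_mul_lt (Or.inl h0.ne') (Or.inl hPA)).mp hn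
  rw [mul_comm] at this
  exact this.le

/-- Sierpiński: atomless finite measures have the Darboux property. -/
lemma atomless_darboux [IsFiniteMeasure P] (hP : Atomless P) {A : Set Ω} (hA : MeasurableSet A)
    {t : ℝ≥0∞} (ht : t ≤ P A) : ∃ B, MeasurableSet B ∧ B ⊆ A ∧ P B = t := by
  classical
  -- candidate predicate
  set Cand : Set Ω → Set Ω → Prop :=
    fun S B => MeasurableSet B ∧ B ⊆ A \ S ∧ P S + P B ≤ t with hCand
  set Good : Set Ω → Prop := fun S => MeasurableSet S ∧ S ⊆ A ∧ P S ≤ t with hGood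
  have claim_pick : ∀ S, Good S → ∃ B, Cand S B ∧ ∀ C, Cand S C → P C ≤ 2 * P B := by
    intro S hS
    set δ : ℝ≥0∞ := sSup (Set.image P {B | Cand S B}) with hδ
    have hne : (Set.image P {B | Cand S B}).Nonempty :=
      ⟨P ∅, ⟨∅, ⟨MeasurableSet.empty, empty_subset _, by simpa using hS.2.2⟩, rfl⟩⟩
    have hδtop : δ ≠ ∞ := by
      refine (lt_of_le_of_lt (sSup_le ?_) (lt_top_iff_ne_top.mpr (measure_ne_top P univ))).ne
      rintro r ⟨B, _, rfl⟩
      exact measure_mono (subset_univ B)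
    rcases eq_or_ne δ 0 with hδ0 | hδ0
    · refine ⟨∅, ⟨MeasurableSet.empty, empty_subset _, by simpa using hS.2.2⟩, ?_⟩
      intro C hC
      have h1 : P C ≤ δ := le_sSup ⟨C, hC, rfl⟩
      rw [hδ0] at h1
      simpa using h1
    · have hhalf : δ / 2 < δ := ENNReal.half_lt_self hδ0 hδtop
      obtain ⟨r, ⟨B, hB, rfl⟩, hr⟩ := lt_sSup_iff.mp hhalf
      refine ⟨B, hB, fun C hC => ?_⟩
      have h1 : P C ≤ δ := le_sSup ⟨C, hC, rfl⟩
      have h2 : δ = 2 * (δ / 2) := by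
        rw [two_mul, ENNReal.add_halves]
      calc P C ≤ δ := h1
        _ = 2 * (δ / 2) := h2
        _ ≤ 2 * P B := mul_le_mul_right hr.le 2
  choose! pick pick_spec using claim_pick
  set seq : ℕ → Set Ω := fun k => Nat.rec ∅ (fun _ S => S ∪ pick S) k with hseq
  have seq_zero : seq 0 = ∅ := rfl
  have seq_succ : ∀ k, seq (k + 1) = seq k ∪ pick (seq k) := fun k => rfl
  have good_seq : ∀ k, Good (seq k) := by
    intro k
    induction k with
    | zero =>
      rw [seq_zero]
      exact ⟨MeasurableSet.empty, empty_subset _, by simp⟩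
    | succ k ih =>
      obtain ⟨⟨hm, hsub, hle⟩, _⟩ := pick_spec (seq k) ih
      rw [seq_succ]
      refine ⟨ih.1.union hm, union_subset ih.2.1 (hsub.trans diff_subset), ?_⟩
      exact le_trans (measure_union_le _ _) hle
  have disj : ∀ k, Disjoint (seq k) (pick (seq k)) := by
    intro k
    exact Set.disjoint_of_subset_right (pick_spec (seq k) (good_seq k)).1.2.1
      disjoint_sdiff_self_right
  have seq_meas : ∀ k, P (seq (k + 1)) = P (seq k) + P (pick (seq k)) := by
    intro k
    rw [seq_succ, measure_union (disj k) (pick_spec (seq k) (good_seq k)).1.1]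
  have seq_mono : Monotone seq := by
    apply monotone_nat_of_le_succ
    intro k; rw [seq_succ]; exact subset_union_left
  set T : Set Ω := ⋃ k, seq k with hT
  have hsubT : ∀ k, seq k ⊆ T := fun k => hT ▸ subset_iUnion seq k
  have hTm : MeasurableSet T := MeasurableSet.iUnion (fun k => (good_seq k).1)
  have hTA : T ⊆ A := iUnion_subset (fun k => (good_seq k).2.1)
  have hTle : P T ≤ t := by
    rw [hT, seq_mono.measure_iUnion]
    exact iSup_le (fun k => (good_seq k).2.2)
  refine ⟨T, hTm, hTA, ?_⟩
  by_contra hne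
  have hTlt : P T < t := lt_of_le_of_ne hTle hne
  have hAT : 0 < P (A \ T) := by
    have : P (A \ T) = P A - P T := measure_diff hTA hTm.nullMeasurableSet (measure_ne_top P T)
    rw [this]
    exact tsub_pos_of_lt (lt_of_lt_of_le hTlt ht)
  obtain ⟨B₀, hB₀m, hB₀sub, hB₀0, hB₀le⟩ :=
    atomless_small hP (hA.diff hTm) hAT (tsub_pos_of_lt hTlt)
  -- B₀ is a candidate at every stage
  have cand_B₀ : ∀ k, Cand (seq k) B₀ := by
    intro k
    refine ⟨hB₀m, hB₀sub.trans (diff_subset_diff_right (subset_iUnion seq k)), ?_⟩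
    calc P (seq k) + P B₀ ≤ P T + (t - P T) :=
          add_le_add (measure_mono (hsubT k)) hB₀le
      _ = t := add_tsub_cancel_of_le hTlt.le
  set c : ℝ≥0∞ := P B₀ / 2 with hc
  have hc0 : c ≠ 0 := by
    simp [hc, ENNReal.div_eq_zero_iff, hB₀0.ne']
  have hctop : c ≠ ∞ := by
    simp [hc, ENNReal.div_eq_top, measure_ne_top P B₀]
  have hpickc : ∀ k, c ≤ P (pick (seq k)) := by
    intro k
    have := (pick_spec (seq k) (good_seq k)).2 B₀ (cand_B₀ k)
    rw [hc, ENNReal.div_le_iff_le_mul (Or.inl two_ne_zero) (Or.inl ENNReal.ofNat_ne_top)]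
    rwa [mul_comm] at this
  have hlower : ∀ k : ℕ, (k : ℝ≥0∞) * c ≤ P (seq k) := by
    intro k
    induction k with
    | zero => simp
    | succ k ih =>
      rw [seq_meas k]
      push_cast
      rw [add_mul, one_mul]
      exact add_le_add ih (hpickc k)
  obtain ⟨k, hk⟩ := ENNReal.exists_nat_gt (ENNReal.div_lt_top (measure_ne_top P univ) hc0).ne
  have : P univ < (k : ℝ≥0∞) * c := by
    have := ENNReal.mul_lt_mul_right hc0 hctop hk
    rw [mul_comm c, mul_comm c] at this
    rwa [ENNReal.div_mul_cancel hc0 hctop] at this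
  have hle : (k : ℝ≥0∞) * c ≤ P univ := le_trans (hlower k) (measure_mono (subset_univ _))
  exact absurd hle (not_le.mpr this)


end darboux

section quantile

variable {Ω : Type*} [MeasurableSpace Ω] {P : Measure Ω} [IsProbabilityMeasure P]
  {X : Ω → ℝ} {α : ℝ}

/-- distribution function -/
noncomputable def distF {Ω : Type*} [MeasurableSpace Ω] (P : Measure Ω) (X : Ω → ℝ) (x : ℝ) : ℝ :=
  (P {ω | X ω ≤ x}).toReal

lemma measurableSet_levelle (hX : Measurable X) (x : ℝ) : MeasurableSet {ω | X ω ≤ x} :=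
  measurableSet_le hX measurable_const

lemma VaR_eq : VaR P X α = sInf {x : ℝ | α ≤ distF P X x} := rfl

lemma distF_mono : Monotone (distF P X) := by
  intro a b hab
  exact ENNReal.toReal_mono (measure_ne_top P _)
    (measure_mono (fun ω (h : X ω ≤ a) => le_trans h hab))

lemma distF_nonneg (x : ℝ) : 0 ≤ distF P X x := ENNReal.toReal_nonneg

lemma distF_le_one (x : ℝ) : distF P X x ≤ 1 := by
  rw [distF, ← ENNReal.toReal_one]
  exact ENNReal.toReal_mono ENNReal.one_ne_top prob_le_one

lemma measure_levelle_eq (x : ℝ) : P {ω | X ω ≤ x} = ENNReal.ofReal (distF P X x) := by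
  rw [distF, ENNReal.ofReal_toReal (measure_ne_top P _)]

lemma exists_distF_ge (hα0 : 0 ≤ α) (hα1 : α < 1) : ∃ x : ℝ, α ≤ distF P X x := by
  have hU : (⋃ n : ℕ, {ω | X ω ≤ (n : ℝ)}) = univ := by
    ext ω; simp only [mem_iUnion, mem_univ, iff_true, mem_setOf_eq]
    obtain ⟨n, hn⟩ := exists_nat_ge (X ω)
    exact ⟨n, hn⟩
  have hmono : Monotone (fun n : ℕ => {ω | X ω ≤ (n : ℝ)}) := by
    intro n m hnm ω (h : X ω ≤ n)
    exact le_trans h (Nat.cast_le.mpr hnm)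
  have hT : Tendsto (fun n : ℕ => P {ω | X ω ≤ (n : ℝ)}) atTop (𝓝 1) := by
    have := tendsto_measure_iUnion_atTop (μ := P) hmono
    rwa [hU, measure_univ] at this
  have hlt : ENNReal.ofReal α < 1 := by
    rw [← ENNReal.ofReal_one]
    exact (ENNReal.ofReal_lt_ofReal_iff_of_nonneg hα0).mpr hα1
  obtain ⟨n, hn⟩ := (hT.eventually (eventually_gt_nhds hlt)).exists
  refine ⟨n, ?_⟩
  have := ENNReal.toReal_mono (measure_ne_top P _) hn.le
  rwa [ENNReal.toReal_ofReal hα0] at this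

lemma bddBelow_VaR_set (hX : Measurable X) (hα : 0 < α) :
    BddBelow {x : ℝ | α ≤ distF P X x} := by
  have hI : (⋂ n : ℕ, {ω | X ω ≤ -(n : ℝ)}) = ∅ := by
    ext ω; simp only [mem_iInter, mem_setOf_eq, mem_empty_iff_false, iff_false, not_forall]
    obtain ⟨n, hn⟩ := exists_nat_gt (-X ω)
    exact ⟨n, by push_neg; linarith⟩
  have hanti : Antitone (fun n : ℕ => {ω | X ω ≤ -(n : ℝ)}) := by
    intro n m hnm ω (h : X ω ≤ -(m : ℝ))
    have : (n : ℝ) ≤ (m : ℝ) := Nat.cast_le.mpr hnm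
    exact le_trans h (by linarith)
  have hT : Tendsto (fun n : ℕ => P {ω | X ω ≤ -(n : ℝ)}) atTop (𝓝 0) := by
    have := tendsto_measure_iInter_atTop (μ := P)
      (fun n => (measurableSet_levelle hX _).nullMeasurableSet) hanti ⟨0, measure_ne_top P _⟩
    rwa [hI, measure_empty] at this
  have hpos : (0 : ℝ≥0∞) < ENNReal.ofReal α := ENNReal.ofReal_pos.mpr hα
  obtain ⟨n, hn⟩ := (hT.eventually (eventually_lt_nhds hpos)).exists
  refine ⟨-(n : ℝ), fun y hy => ?_⟩
  by_contra hlt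
  push_neg at hlt
  have h1 : distF P X y ≤ distF P X (-(n : ℝ)) := distF_mono hlt.le
  have h2 : distF P X (-(n : ℝ)) < α := by
    rw [distF]
    exact (ENNReal.lt_ofReal_iff_toReal_lt (measure_ne_top P _)).mp hn
  have hy' : α ≤ distF P X y := hy
  linarith

lemma VaR_set_nonempty (hα0 : 0 ≤ α) (hα1 : α < 1) : {x : ℝ | α ≤ distF P X x}.Nonempty :=
  exists_distF_ge hα0 hα1

/-- right continuity at the quantile: `α ≤ F (VaR α)` -/
lemma le_distF_VaR (hX : Measurable X) (hα0 : 0 < α) (hα1 : α < 1) :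
    α ≤ distF P X (VaR P X α) := by
  set q := VaR P X α with hq
  have hbdd := bddBelow_VaR_set (P := P) hX hα0
  have hne := VaR_set_nonempty (P := P) (X := X) hα0.le hα1
  have key : ∀ n : ℕ, α ≤ distF P X (q + 1 / (n + 1)) := by
    intro n
    have hpos : (0 : ℝ) < 1 / (n + 1) := by positivity
    obtain ⟨x, hxS, hxlt⟩ := (csInf_lt_iff hbdd hne).mp (lt_add_of_pos_right q hpos)
    exact le_trans hxS (distF_mono hxlt.le)
  have hIeq : {ω | X ω ≤ q} = ⋂ n : ℕ, {ω | X ω ≤ q + 1 / (n + 1)} := by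
    ext ω
    simp only [mem_iInter, mem_setOf_eq]
    constructor
    · intro h n
      have hpos : (0 : ℝ) < 1 / ((n : ℝ) + 1) := by positivity
      linarith
    · intro h
      by_contra hgt
      push_neg at hgt
      obtain ⟨n, hn⟩ := exists_nat_one_div_lt (show (0:ℝ) < X ω - q by linarith)
      have := h n
      linarith
  have hanti : Antitone (fun n : ℕ => {ω | X ω ≤ q + 1 / (n + 1)}) := by
    intro n m hnm ω (h : X ω ≤ q + 1 / (m + 1))
    have h1 : (1 : ℝ) / (m + 1) ≤ 1 / (n + 1) := by
      apply one_div_le_one_div_of_le (by positivity)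
      have : (n : ℝ) ≤ m := Nat.cast_le.mpr hnm
      linarith
    exact le_trans h (by linarith)
  have hT : Tendsto (fun n : ℕ => P {ω | X ω ≤ q + 1 / (n + 1)}) atTop
      (𝓝 (P {ω | X ω ≤ q})) := by
    have := tendsto_measure_iInter_atTop (μ := P)
      (fun n => (measurableSet_levelle hX _).nullMeasurableSet) hanti ⟨0, measure_ne_top P _⟩
    rwa [← hIeq] at this
  have hge : ENNReal.ofReal α ≤ P {ω | X ω ≤ q} := by
    refine ge_of_tendsto hT (Eventually.of_forall (fun n => ?_))
    rw [measure_levelle_eq]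
    exact ENNReal.ofReal_le_ofReal (key n)
  have := ENNReal.toReal_mono (measure_ne_top P _) hge
  rwa [ENNReal.toReal_ofReal hα0.le] at this

lemma VaR_le_iff (hX : Measurable X) (hα0 : 0 < α) (hα1 : α < 1) {c : ℝ} :
    VaR P X α ≤ c ↔ α ≤ distF P X c := by
  constructor
  · intro h
    exact le_trans (le_distF_VaR hX hα0 hα1) (distF_mono h)
  · intro h
    exact csInf_le (bddBelow_VaR_set hX hα0) h

lemma distF_lt_of_lt_VaR (hX : Measurable X) (hα0 : 0 < α) (hα1 : α < 1) {t : ℝ}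
    (ht : t < VaR P X α) : distF P X t < α := by
  by_contra h
  push_neg at h
  exact absurd ((VaR_le_iff hX hα0 hα1).mpr h) (not_le.mpr ht)

lemma VaR_mono (hX : Measurable X) {α' : ℝ} (hα0 : 0 < α) (hle : α ≤ α') (hα1 : α' < 1) :
    VaR P X α ≤ VaR P X α' := by
  apply csInf_le_csInf (bddBelow_VaR_set hX hα0) (VaR_set_nonempty (lt_of_lt_of_le hα0 hle).le hα1)
  intro x hx
  exact le_trans hle hx

lemma measure_lt_VaR_le (hX : Measurable X) (hα0 : 0 < α) (hα1 : α < 1) :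
    P {ω | X ω < VaR P X α} ≤ ENNReal.ofReal α := by
  set q := VaR P X α with hq
  have hUeq : {ω | X ω < q} = ⋃ n : ℕ, {ω | X ω ≤ q - 1 / (n + 1)} := by
    ext ω
    simp only [mem_iUnion, mem_setOf_eq]
    constructor
    · intro h
      obtain ⟨n, hn⟩ := exists_nat_one_div_lt (show (0:ℝ) < q - X ω by linarith)
      exact ⟨n, by linarith⟩
    · rintro ⟨n, hn⟩
      have hpos : (0 : ℝ) < 1 / (n + 1) := by positivity
      linarith
  have hmono : Monotone (fun n : ℕ => {ω | X ω ≤ q - 1 / (n + 1)}) := by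
    intro n m hnm ω (h : X ω ≤ q - 1 / (n + 1))
    have h1 : (1 : ℝ) / (m + 1) ≤ 1 / (n + 1) := by
      apply one_div_le_one_div_of_le (by positivity)
      have : (n : ℝ) ≤ m := Nat.cast_le.mpr hnm
      linarith
    exact le_trans h (by linarith)
  rw [hUeq, hmono.measure_iUnion]
  apply iSup_le
  intro n
  have hlt : q - 1 / (n + 1) < q := by
    have hpos : (0 : ℝ) < 1 / (n + 1) := by positivity
    linarith
  have := distF_lt_of_lt_VaR hX hα0 hα1 hlt
  rw [measure_levelle_eq]
  exact ENNReal.ofReal_le_ofReal this.le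

lemma ofReal_le_measure_levelle_VaR (hX : Measurable X) (hα0 : 0 < α) (hα1 : α < 1) :
    ENNReal.ofReal α ≤ P {ω | X ω ≤ VaR P X α} := by
  rw [measure_levelle_eq]
  exact ENNReal.ofReal_le_ofReal (le_distF_VaR hX hα0 hα1)

lemma ofReal_le_measure_ge_VaR (hX : Measurable X) (hα0 : 0 < α) (hα1 : α < 1) :
    ENNReal.ofReal (1 - α) ≤ P {ω | VaR P X α ≤ X ω} := by
  have hc : {ω | VaR P X α ≤ X ω} = {ω | X ω < VaR P X α}ᶜ := by
    ext ω; simp [not_lt]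
  rw [hc, measure_compl (measurableSet_lt hX measurable_const) (measure_ne_top P _), measure_univ]
  have h1 : ENNReal.ofReal (1 - α) = 1 - ENNReal.ofReal α := by
    rw [← ENNReal.ofReal_one, ← ENNReal.ofReal_sub _ hα0.le]
  rw [h1]
  exact tsub_le_tsub_left (measure_lt_VaR_le hX hα0 hα1) 1

lemma measure_gt_VaR_le (hX : Measurable X) (hα0 : 0 < α) (hα1 : α < 1) :
    P {ω | VaR P X α < X ω} ≤ ENNReal.ofReal (1 - α) := by
  have hc : {ω | VaR P X α < X ω} = {ω | X ω ≤ VaR P X α}ᶜ := by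
    ext ω; simp [not_le]
  rw [hc, measure_compl (measurableSet_levelle hX _) (measure_ne_top P _), measure_univ]
  have h1 : ENNReal.ofReal (1 - α) = 1 - ENNReal.ofReal α := by
    rw [← ENNReal.ofReal_one, ← ENNReal.ofReal_sub _ hα0.le]
  rw [h1]
  exact tsub_le_tsub_left (ofReal_le_measure_levelle_VaR hX hα0 hα1) 1

end quantile

section transform

variable {Ω : Type*} [MeasurableSpace Ω] {P : Measure Ω} [IsProbabilityMeasure P]
  {X : Ω → ℝ}

lemma prob_restrict_Ioo01 : IsProbabilityMeasure (volume.restrict (Ioo (0:ℝ) 1)) := by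
  constructor
  rw [Measure.restrict_apply_univ, Real.volume_Ioo]
  simp

lemma VaR_aemeasurable (hX : Measurable X) :
    AEMeasurable (VaR P X) (volume.restrict (Ioo (0:ℝ) 1)) := by
  apply aemeasurable_restrict_of_monotoneOn measurableSet_Ioo
  intro u hu v hv huv
  exact VaR_mono hX hu.1 huv hv.2

lemma map_VaR_eq (hX : Measurable X) :
    (volume.restrict (Ioo (0:ℝ) 1)).map (VaR P X) = P.map X := by
  haveI := prob_restrict_Ioo01
  haveI : IsProbabilityMeasure ((volume.restrict (Ioo (0:ℝ) 1)).map (VaR P X)) :=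
    Measure.isProbabilityMeasure_map (VaR_aemeasurable hX)
  haveI : IsProbabilityMeasure (P.map X) := Measure.isProbabilityMeasure_map hX.aemeasurable
  apply Measure.ext_of_Iic
  intro a
  rw [Measure.map_apply_of_aemeasurable (VaR_aemeasurable hX) measurableSet_Iic,
    Measure.restrict_apply' measurableSet_Ioo,
    Measure.map_apply hX measurableSet_Iic]
  have hpre : X ⁻¹' (Iic a) = {ω | X ω ≤ a} := rfl
  rw [hpre, measure_levelle_eq]
  have hset : VaR P X ⁻¹' Iic a ∩ Ioo 0 1 = {u : ℝ | 0 < u ∧ u < 1 ∧ u ≤ distF P X a} := by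
    ext u
    simp only [mem_inter_iff, mem_preimage, mem_Iic, mem_Ioo, mem_setOf_eq]
    constructor
    · rintro ⟨h1, h2, h3⟩
      exact ⟨h2, h3, (VaR_le_iff hX h2 h3).mp h1⟩
    · rintro ⟨h1, h2, h3⟩
      exact ⟨(VaR_le_iff hX h1 h2).mpr h3, h1, h2⟩
  rw [hset]
  rcases lt_or_ge (distF P X a) 1 with hF | hF
  · have : {u : ℝ | 0 < u ∧ u < 1 ∧ u ≤ distF P X a} = Ioc 0 (distF P X a) := by
      ext u
      simp only [mem_setOf_eq, mem_Ioc]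
      constructor
      · rintro ⟨h1, _, h3⟩; exact ⟨h1, h3⟩
      · rintro ⟨h1, h2⟩; exact ⟨h1, lt_of_le_of_lt h2 hF, h2⟩
    rw [this, Real.volume_Ioc, sub_zero]
  · have hF1 : distF P X a = 1 := le_antisymm (distF_le_one a) hF
    have : {u : ℝ | 0 < u ∧ u < 1 ∧ u ≤ distF P X a} = Ioo 0 1 := by
      ext u
      simp only [mem_setOf_eq, mem_Ioo, hF1]
      constructor
      · rintro ⟨h1, h2, _⟩; exact ⟨h1, h2⟩
      · rintro ⟨h1, h2⟩; exact ⟨h1, h2, h2.le⟩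
    rw [this, Real.volume_Ioo, hF1]
    simp

lemma integrableOn_comp_VaR (hX : Measurable X) {f : ℝ → ℝ} (hf : Measurable f)
    (hfi : Integrable (fun ω => f (X ω)) P) :
    IntegrableOn (fun u => f (VaR P X u)) (Ioo (0:ℝ) 1) volume := by
  have h1 : Integrable f (P.map X) :=
    (integrable_map_measure hf.aestronglyMeasurable hX.aemeasurable).mpr hfi
  rw [← map_VaR_eq hX] at h1
  exact (integrable_map_measure hf.aestronglyMeasurable (VaR_aemeasurable hX)).mp h1

lemma integral_comp_VaR (hX : Measurable X) {f : ℝ → ℝ} (hf : Measurable f) :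
    ∫ u in Ioo (0:ℝ) 1, f (VaR P X u) = ∫ ω, f (X ω) ∂P := by
  have h1 : ∫ y, f y ∂(P.map X) = ∫ ω, f (X ω) ∂P :=
    integral_map hX.aemeasurable hf.aestronglyMeasurable
  rw [← map_VaR_eq hX] at h1
  rw [← integral_map (VaR_aemeasurable hX) hf.aestronglyMeasurable]
  exact h1

lemma integrableOn_VaR (hX : Measurable X) (hXi : Integrable X P) :
    IntegrableOn (fun u => VaR P X u) (Ioo (0:ℝ) 1) volume := by
  have := integrableOn_comp_VaR (P := P) hX (f := fun t : ℝ => t) measurable_id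
    (by simpa using hXi)
  simpa using this

lemma integral_VaR_eq_expectation (hX : Measurable X) :
    ∫ u in Ioo (0:ℝ) 1, VaR P X u = ∫ ω, X ω ∂P := by
  have := integral_comp_VaR (P := P) hX (f := fun t : ℝ => t) measurable_id
  simpa using this

set_option maxHeartbeats 1000000 in
/-- The key identity: expected shortfall-type formula. -/
lemma expected_excess_eq (hX : Measurable X) (hXi : Integrable X P) {β : ℝ}
    (hβ : β ∈ Ioo (0:ℝ) 1) :
    ∫ ω, max (X ω - VaR P X β) 0 ∂P
      = ∫ u in Ioo β 1, (VaR P X u - VaR P X β) := by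
  set a := VaR P X β with ha
  have hfm : Measurable (fun t : ℝ => max (t - a) 0) :=
    (measurable_id.sub_const a).max measurable_const
  have hfi : Integrable (fun ω => max (X ω - a) 0) P := (hXi.sub (integrable_const a)).pos_part
  have h1 : ∫ u in Ioo (0:ℝ) 1, max (VaR P X u - a) 0 = ∫ ω, max (X ω - a) 0 ∂P := by
    have := integral_comp_VaR (P := P) hX (f := fun t : ℝ => max (t - a) 0) hfm
    simpa using this
  have hIOn : IntegrableOn (fun u => max (VaR P X u - a) 0) (Ioo (0:ℝ) 1) volume := by
    have := integrableOn_comp_VaR (P := P) hX (f := fun t : ℝ => max (t - a) 0) hfm hfi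
    simpa using this
  have hsplit : Ioc (0:ℝ) β ∪ Ioo β 1 = Ioo 0 1 := Ioc_union_Ioo_eq_Ioo hβ.1.le hβ.2
  have hdisj : Disjoint (Ioc (0:ℝ) β) (Ioo β 1) := by
    apply Set.disjoint_left.mpr
    rintro u ⟨_, h2⟩ ⟨h3, _⟩
    linarith
  have heq1 : EqOn (fun u => max (VaR P X u - a) 0) (fun _ => (0:ℝ)) (Ioc (0:ℝ) β) := by
    intro u hu
    have : VaR P X u ≤ a := VaR_mono hX hu.1 hu.2 hβ.2
    simp only [max_eq_right (sub_nonpos.mpr this)]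
  have heq2 : EqOn (fun u => max (VaR P X u - a) 0) (fun u => VaR P X u - a) (Ioo β 1) := by
    intro u hu
    have : a ≤ VaR P X u := VaR_mono hX hβ.1 hu.1.le hu.2
    simp only [max_eq_left (sub_nonneg.mpr this)]
  have hI1 : IntegrableOn (fun u => max (VaR P X u - a) 0) (Ioc (0:ℝ) β) volume :=
    hIOn.mono_set (fun u hu => ⟨hu.1, lt_of_le_of_lt hu.2 hβ.2⟩)
  have hI2 : IntegrableOn (fun u => max (VaR P X u - a) 0) (Ioo β 1) volume :=
    hIOn.mono_set (fun u hu => ⟨lt_trans hβ.1 hu.1, hu.2⟩)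
  calc ∫ ω, max (X ω - a) 0 ∂P
      = ∫ u in Ioo (0:ℝ) 1, max (VaR P X u - a) 0 := h1.symm
    _ = (∫ u in Ioc (0:ℝ) β, max (VaR P X u - a) 0) + ∫ u in Ioo β 1, max (VaR P X u - a) 0 := by
        rw [← hsplit, setIntegral_union hdisj measurableSet_Ioo hI1 hI2]
    _ = 0 + ∫ u in Ioo β 1, (VaR P X u - a) := by
        rw [setIntegral_congr_fun measurableSet_Ioc heq1,
          setIntegral_congr_fun measurableSet_Ioo heq2]
        simp
    _ = ∫ u in Ioo β 1, (VaR P X u - a) := by rw [zero_add]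

end transform

section mainlemmas

variable {Ω : Type*} [MeasurableSpace Ω] {P : Measure Ω} [IsProbabilityMeasure P]
  {n : ℕ} {X : Fin n → Ω → ℝ}

lemma ae_VaR_sum_eq (hmeas : ∀ i, Measurable (X i)) (hint : ∀ i, Integrable (X i) P)
    (hsub : ∀ α ∈ Set.Ioo (0 : ℝ) 1,
      VaR P (fun ω => ∑ i, X i ω) α ≤ ∑ i, VaR P (X i) α) :
    (fun u => VaR P (fun ω => ∑ i, X i ω) u)
      =ᵐ[volume.restrict (Ioo (0:ℝ) 1)]
    (fun u => ∑ i, VaR P (X i) u) := by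
  set S : Ω → ℝ := fun ω => ∑ i, X i ω with hSdef
  have hS : Measurable S := Finset.measurable_sum _ (fun i _ => hmeas i)
  have hSi : Integrable S P := integrable_finset_sum _ (fun i _ => hint i)
  set f : ℝ → ℝ := fun u => VaR P S u with hfdef
  set g : ℝ → ℝ := fun u => ∑ i, VaR P (X i) u with hgdef
  have hfi : Integrable f (volume.restrict (Ioo (0:ℝ) 1)) := integrableOn_VaR hS hSi
  have hgi : Integrable g (volume.restrict (Ioo (0:ℝ) 1)) :=
    integrable_finset_sum _ (fun i _ => integrableOn_VaR (hmeas i) (hint i))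
  have hle : ∀ᵐ u ∂(volume.restrict (Ioo (0:ℝ) 1)), f u ≤ g u := by
    refine (ae_restrict_iff' measurableSet_Ioo).mpr (Filter.Eventually.of_forall ?_)
    intro u hu
    exact hsub u hu
  have hint_eq : ∫ u in Ioo (0:ℝ) 1, f u = ∫ u in Ioo (0:ℝ) 1, g u := by
    have h1 : ∫ u in Ioo (0:ℝ) 1, f u = ∫ ω, S ω ∂P := integral_VaR_eq_expectation hS
    have h2 : ∫ u in Ioo (0:ℝ) 1, g u = ∑ i, ∫ u in Ioo (0:ℝ) 1, VaR P (X i) u :=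
      integral_finset_sum _ (fun i _ => integrableOn_VaR (hmeas i) (hint i))
    have h3 : ∀ i, ∫ u in Ioo (0:ℝ) 1, VaR P (X i) u = ∫ ω, X i ω ∂P :=
      fun i => integral_VaR_eq_expectation (hmeas i)
    have h4 : ∫ ω, S ω ∂P = ∑ i, ∫ ω, X i ω ∂P := integral_finset_sum _ (fun i _ => hint i)
    rw [h1, h2, h4]
    exact Finset.sum_congr rfl (fun i _ => (h3 i).symm)
  have hsubint : Integrable (fun u => g u - f u) (volume.restrict (Ioo (0:ℝ) 1)) := hgi.sub hfi
  have hzero : ∫ u in Ioo (0:ℝ) 1, (g u - f u) = 0 := by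
    rw [integral_sub hgi hfi, hint_eq, sub_self]
  have hnonneg : 0 ≤ᵐ[volume.restrict (Ioo (0:ℝ) 1)] (fun u => g u - f u) := by
    filter_upwards [hle] with u hu
    simpa using hu
  have := (integral_eq_zero_iff_of_nonneg_ae hnonneg hsubint).mp hzero
  filter_upwards [this] with u hu
  have : g u - f u = 0 := hu
  linarith

lemma exists_good_level (hmeas : ∀ i, Measurable (X i)) (hint : ∀ i, Integrable (X i) P)
    (hsub : ∀ α ∈ Set.Ioo (0 : ℝ) 1,
      VaR P (fun ω => ∑ i, X i ω) α ≤ ∑ i, VaR P (X i) α)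
    {lo hi : ℝ} (h0 : 0 ≤ lo) (hlohi : lo < hi) (h1 : hi ≤ 1) :
    ∃ β ∈ Ioo lo hi, VaR P (fun ω => ∑ i, X i ω) β = ∑ i, VaR P (X i) β := by
  have hae := ae_VaR_sum_eq hmeas hint hsub
  have hnull : volume ({u : ℝ | ¬ (VaR P (fun ω => ∑ i, X i ω) u = ∑ i, VaR P (X i) u)}
      ∩ Ioo (0:ℝ) 1) = 0 := by
    have := ae_iff.mp hae
    rwa [Measure.restrict_apply' measurableSet_Ioo] at this
  by_contra hcon
  push_neg at hcon
  have hsubset : Ioo lo hi ⊆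
      {u : ℝ | ¬ (VaR P (fun ω => ∑ i, X i ω) u = ∑ i, VaR P (X i) u)} ∩ Ioo (0:ℝ) 1 := by
    intro u hu
    refine ⟨hcon u hu, lt_of_le_of_lt h0 hu.1, lt_of_lt_of_le hu.2 h1⟩
  have : volume (Ioo lo hi) = 0 := measure_mono_null hsubset hnull
  rw [Real.volume_Ioo] at this
  have hpos : (0:ℝ≥0∞) < ENNReal.ofReal (hi - lo) := ENNReal.ofReal_pos.mpr (by linarith)
  exact absurd this hpos.ne'

lemma sum_excess_eq (hmeas : ∀ i, Measurable (X i)) (hint : ∀ i, Integrable (X i) P)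
    {β : ℝ} (hβ : β ∈ Ioo (0:ℝ) 1)
    (hgood : VaR P (fun ω => ∑ i, X i ω) β = ∑ i, VaR P (X i) β)
    (hae : (fun u => VaR P (fun ω => ∑ i, X i ω) u)
      =ᵐ[volume.restrict (Ioo (0:ℝ) 1)] (fun u => ∑ i, VaR P (X i) u)) :
    ∑ i, ∫ ω, max (X i ω - VaR P (X i) β) 0 ∂P
      = ∫ ω, max ((∑ i, X i ω) - VaR P (fun ω => ∑ i, X i ω) β) 0 ∂P := by
  set S : Ω → ℝ := fun ω => ∑ i, X i ω with hSdef
  have hS : Measurable S := Finset.measurable_sum _ (fun i _ => hmeas i)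
  have hSi : Integrable S P := integrable_finset_sum _ (fun i _ => hint i)
  have hIsub : Ioo β 1 ⊆ Ioo (0:ℝ) 1 := fun u hu => ⟨lt_trans hβ.1 hu.1, hu.2⟩
  have hconst : ∀ c : ℝ, IntegrableOn (fun _ : ℝ => c) (Ioo β 1) volume := by
    intro c
    apply (integrableOn_const_iff enorm_ne_top).mpr
    right
    rw [Real.volume_Ioo]
    exact ENNReal.ofReal_lt_top
  have hqint : ∀ i : Fin n, IntegrableOn (fun u => VaR P (X i) u - VaR P (X i) β)
      (Ioo β 1) volume :=
    fun i => ((integrableOn_VaR (hmeas i) (hint i)).mono_set hIsub).sub (hconst _)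
  have h1 : ∀ i : Fin n, ∫ ω, max (X i ω - VaR P (X i) β) 0 ∂P
      = ∫ u in Ioo β 1, (VaR P (X i) u - VaR P (X i) β) :=
    fun i => expected_excess_eq (hmeas i) (hint i) hβ
  have h2 : ∑ i, ∫ u in Ioo β 1, (VaR P (X i) u - VaR P (X i) β)
      = ∫ u in Ioo β 1, (∑ i, (VaR P (X i) u - VaR P (X i) β)) :=
    (integral_finset_sum _ (fun i _ => hqint i)).symm
  have hae' : ∀ᵐ u ∂(volume.restrict (Ioo β 1)),
      (∑ i, (VaR P (X i) u - VaR P (X i) β)) = VaR P S u - VaR P S β := by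
    have hres : (fun u => VaR P S u) =ᵐ[volume.restrict (Ioo β 1)]
        (fun u => ∑ i, VaR P (X i) u) :=
      ae_restrict_of_ae_restrict_of_subset hIsub hae
    filter_upwards [hres] with u hu
    rw [Finset.sum_sub_distrib, ← hu, ← hgood]
  have h3 : ∫ u in Ioo β 1, (∑ i, (VaR P (X i) u - VaR P (X i) β))
      = ∫ u in Ioo β 1, (VaR P S u - VaR P S β) := integral_congr_ae hae'
  have h4 : ∫ u in Ioo β 1, (VaR P S u - VaR P S β) = ∫ ω, max (S ω - VaR P S β) 0 ∂P :=
    (expected_excess_eq hS hSi hβ).symm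
  calc ∑ i, ∫ ω, max (X i ω - VaR P (X i) β) 0 ∂P
      = ∑ i, ∫ u in Ioo β 1, (VaR P (X i) u - VaR P (X i) β) :=
        Finset.sum_congr rfl (fun i _ => h1 i)
    _ = ∫ ω, max (S ω - VaR P S β) 0 ∂P := by rw [h2, h3, h4]

lemma extraction (hmeas : ∀ i, Measurable (X i)) (hint : ∀ i, Integrable (X i) P)
    {β : ℝ} (hβ : β ∈ Ioo (0:ℝ) 1)
    (hgood : VaR P (fun ω => ∑ i, X i ω) β = ∑ i, VaR P (X i) β)
    (hae : (fun u => VaR P (fun ω => ∑ i, X i ω) u)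
      =ᵐ[volume.restrict (Ioo (0:ℝ) 1)] (fun u => ∑ i, VaR P (X i) u))
    {A : Set Ω} (hA : MeasurableSet A)
    (hA1 : ∀ ω ∈ A, VaR P (fun ω => ∑ i, X i ω) β ≤ (∑ i, X i ω))
    (hA2 : ∀ ω, ω ∉ A → (∑ i, X i ω) ≤ VaR P (fun ω => ∑ i, X i ω) β) :
    ∀ i, P (A ∩ {ω | X i ω < VaR P (X i) β}) = 0
      ∧ P ({ω | VaR P (X i) β < X i ω} \ A) = 0 := by
  classical
  set S : Ω → ℝ := fun ω => ∑ i, X i ω with hSdef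
  set aS : ℝ := VaR P S β with haS
  set a : Fin n → ℝ := fun i => VaR P (X i) β with hadef
  set D : Fin n → Ω → ℝ := fun i ω =>
    max (X i ω - a i) 0 - A.indicator (fun ω => X i ω - a i) ω with hDdef
  have hDint : ∀ i, Integrable (D i) P := by
    intro i
    exact ((hint i).sub (integrable_const (a i))).pos_part.sub
      (((hint i).sub (integrable_const (a i))).indicator hA)
  have hDnonneg : ∀ i ω, 0 ≤ D i ω := by
    intro i ω
    by_cases hω : ω ∈ A
    · simp only [hDdef, Set.indicator_of_mem hω]
      have := le_max_left (X i ω - a i) 0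
      linarith
    · simp only [hDdef, Set.indicator_of_notMem hω]
      have := le_max_right (X i ω - a i) 0
      linarith
  -- the analogous quantity for S vanishes identically
  have hOS : (fun ω => max (S ω - aS) 0) = A.indicator (fun ω => S ω - aS) := by
    funext ω
    by_cases hω : ω ∈ A
    · rw [Set.indicator_of_mem hω]
      exact max_eq_left (sub_nonneg.mpr (hA1 ω hω))
    · rw [Set.indicator_of_notMem hω]
      exact max_eq_right (sub_nonpos.mpr (hA2 ω hω))
  -- sum of the indicator integrals
  have hindsum : ∑ i, ∫ ω, A.indicator (fun ω => X i ω - a i) ω ∂P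
      = ∫ ω, A.indicator (fun ω => S ω - aS) ω ∂P := by
    have hs := integral_finset_sum (μ := P) Finset.univ
      (f := fun (i : Fin n) (ω : Ω) => A.indicator (fun ω => X i ω - a i) ω)
      (fun i _ => ((hint i).sub (integrable_const (a i))).indicator hA)
    rw [← hs]
    congr 1
    funext ω
    by_cases hω : ω ∈ A
    · simp only [Set.indicator_of_mem hω]
      rw [Finset.sum_sub_distrib]
      congr 1
      exact hgood.symm
    · simp only [Set.indicator_of_notMem hω, Finset.sum_const_zero]
  have hsumD : ∑ i, ∫ ω, D i ω ∂P = 0 := by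
    have hsplit : ∀ i, ∫ ω, D i ω ∂P = (∫ ω, max (X i ω - a i) 0 ∂P)
        - ∫ ω, A.indicator (fun ω => X i ω - a i) ω ∂P := by
      intro i
      exact integral_sub ((hint i).sub (integrable_const (a i))).pos_part
        (((hint i).sub (integrable_const (a i))).indicator hA)
    rw [Finset.sum_congr rfl (fun i _ => hsplit i), Finset.sum_sub_distrib,
      sum_excess_eq hmeas hint hβ hgood hae, hindsum]
    rw [← hOS]
    exact sub_self _
  have hDzero : ∀ i, ∫ ω, D i ω ∂P = 0 := by
    intro i
    have h := (Finset.sum_eq_zero_iff_of_nonneg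
      (fun j _ => integral_nonneg (fun ω => hDnonneg j ω))).mp hsumD
    exact h i (Finset.mem_univ i)
  have hDae : ∀ i, ∀ᵐ ω ∂P, D i ω = 0 := by
    intro i
    have := (integral_eq_zero_iff_of_nonneg (fun ω => hDnonneg i ω) (hDint i)).mp (hDzero i)
    filter_upwards [this] with ω hω
    exact hω
  intro i
  have hnull : P {ω | ¬ (D i ω = 0)} = 0 := ae_iff.mp (hDae i)
  constructor
  · apply measure_mono_null _ hnull
    rintro ω ⟨hωA, hωlt⟩
    have hlt : X i ω - a i < 0 := sub_neg.mpr hωlt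
    simp only [mem_setOf_eq, hDdef, Set.indicator_of_mem hωA]
    rw [max_eq_right hlt.le]
    intro hcon
    linarith
  · apply measure_mono_null _ hnull
    rintro ω ⟨hωgt, hωA⟩
    have hgt : 0 < X i ω - a i := sub_pos.mpr hωgt
    simp only [mem_setOf_eq, hDdef, Set.indicator_of_notMem hωA]
    rw [max_eq_left hgt.le]
    intro hcon
    linarith

end mainlemmas

section construct

variable {Ω : Type*} [MeasurableSpace Ω] {P : Measure Ω} [IsProbabilityMeasure P] {S : Ω → ℝ}

lemma construct_pair (hP : Atomless P) (hS : Measurable S) {β' β'' : ℝ}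
    (hβ' : β' ∈ Ioo (0:ℝ) 1) (hβ'' : β'' ∈ Ioo (0:ℝ) 1) (hle : β' ≤ β'') :
    ∃ A' A'' : Set Ω, MeasurableSet A' ∧ MeasurableSet A'' ∧ A'' ⊆ A' ∧
      P A' = ENNReal.ofReal (1 - β') ∧ P A'' = ENNReal.ofReal (1 - β'') ∧
      {ω | VaR P S β' < S ω} ⊆ A' ∧ A' ⊆ {ω | VaR P S β' ≤ S ω} ∧
      {ω | VaR P S β'' < S ω} ⊆ A'' ∧ A'' ⊆ {ω | VaR P S β'' ≤ S ω} := by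
  set q' : ℝ := VaR P S β' with hq'
  set q'' : ℝ := VaR P S β'' with hq''
  have hqle : q' ≤ q'' := VaR_mono hS hβ'.1 hle hβ''.2
  set G'' : Set Ω := {ω | q'' < S ω} with hG''
  set GE'' : Set Ω := {ω | q'' ≤ S ω} with hGE''
  set G' : Set Ω := {ω | q' < S ω} with hG'
  set GE' : Set Ω := {ω | q' ≤ S ω} with hGE'
  have hG''m : MeasurableSet G'' := measurableSet_lt measurable_const hS
  have hGE''m : MeasurableSet GE'' := measurableSet_le measurable_const hS
  have hG'm : MeasurableSet G' := measurableSet_lt measurable_const hS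
  have hGE'm : MeasurableSet GE' := measurableSet_le measurable_const hS
  have hsub'' : G'' ⊆ GE'' := fun ω (h : q'' < S ω) => (le_of_lt h : q'' ≤ S ω)
  have hm1 : P G'' ≤ ENNReal.ofReal (1 - β'') := measure_gt_VaR_le hS hβ''.1 hβ''.2
  have hm2 : ENNReal.ofReal (1 - β'') ≤ P GE'' := ofReal_le_measure_ge_VaR hS hβ''.1 hβ''.2
  -- step 1 : construct A''
  have hdiff'' : P (GE'' \ G'') = P GE'' - P G'' :=
    measure_diff hsub'' hG''m.nullMeasurableSet (measure_ne_top P _)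
  have ht''le : ENNReal.ofReal (1 - β'') - P G'' ≤ P (GE'' \ G'') := by
    rw [hdiff'']
    exact tsub_le_tsub_right hm2 _
  obtain ⟨B'', hB''m, hB''sub, hB''meas⟩ := atomless_darboux hP (hGE''m.diff hG''m) ht''le
  set A'' : Set Ω := G'' ∪ B'' with hA''
  have hA''m : MeasurableSet A'' := hG''m.union hB''m
  have hdisj'' : Disjoint G'' B'' :=
    Set.disjoint_of_subset_right hB''sub disjoint_sdiff_self_right
  have hPA'' : P A'' = ENNReal.ofReal (1 - β'') := by
    rw [hA'', measure_union hdisj'' hB''m, hB''meas, add_tsub_cancel_of_le hm1]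
  have hA''sand1 : G'' ⊆ A'' := subset_union_left
  have hA''sand2 : A'' ⊆ GE'' := union_subset hsub'' (hB''sub.trans diff_subset)
  -- step 2 : construct A' ⊇ A''
  set D : Set Ω := A'' ∪ G' with hD
  have hDm : MeasurableSet D := hA''m.union hG'm
  have hDsub : D ⊆ GE' := by
    apply union_subset
    · exact fun ω h => (le_trans hqle (hA''sand2 h) : q' ≤ S ω)
    · exact fun ω (h : q' < S ω) => (le_of_lt h : q' ≤ S ω)
  have hm1' : P G' ≤ ENNReal.ofReal (1 - β') := measure_gt_VaR_le hS hβ'.1 hβ'.2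
  have hm2' : ENNReal.ofReal (1 - β') ≤ P GE' := ofReal_le_measure_ge_VaR hS hβ'.1 hβ'.2
  have hPD : P D ≤ ENNReal.ofReal (1 - β') := by
    rcases eq_or_lt_of_le hqle with heq | hlt
    · have : D = A'' := by
        rw [hD]
        have : G' ⊆ A'' := by
          rw [hG', heq]
          exact hA''sand1
        exact union_eq_self_of_subset_right this
      rw [this, hPA'']
      exact ENNReal.ofReal_le_ofReal (by linarith)
    · have : D = G' := by
        rw [hD]
        have : A'' ⊆ G' := fun ω h => (lt_of_lt_of_le hlt (hA''sand2 h) : q' < S ω)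
        exact union_eq_self_of_subset_left this
      rw [this]
      exact hm1'
  have hdiff' : P (GE' \ D) = P GE' - P D :=
    measure_diff hDsub hDm.nullMeasurableSet (measure_ne_top P _)
  have ht'le : ENNReal.ofReal (1 - β') - P D ≤ P (GE' \ D) := by
    rw [hdiff']
    exact tsub_le_tsub_right hm2' _
  obtain ⟨B', hB'm, hB'sub, hB'meas⟩ := atomless_darboux hP (hGE'm.diff hDm) ht'le
  set A' : Set Ω := D ∪ B' with hA'
  have hA'm : MeasurableSet A' := hDm.union hB'm
  have hdisj' : Disjoint D B' :=
    Set.disjoint_of_subset_right hB'sub disjoint_sdiff_self_right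
  have hPA' : P A' = ENNReal.ofReal (1 - β') := by
    rw [hA', measure_union hdisj' hB'm, hB'meas, add_tsub_cancel_of_le hPD]
  refine ⟨A', A'', hA'm, hA''m, ?_, hPA', hPA'', ?_, ?_, hA''sand1, hA''sand2⟩
  · exact (subset_union_left (t := G')).trans subset_union_left
  · exact ((subset_union_right (s := A'')).trans subset_union_left)
  · exact union_subset hDsub (hB'sub.trans diff_subset)

end construct

theorem subadditive_VaR_implies_comonotonic {Ω : Type*} [MeasurableSpace Ω]
    (P : Measure Ω) [IsProbabilityMeasure P] (hP : Atomless P)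
    {n : ℕ} (X : Fin n → Ω → ℝ) (hmeas : ∀ i, Measurable (X i))
    (hint : ∀ i, Integrable (X i) P)
    (hsub : ∀ α ∈ Set.Ioo (0 : ℝ) 1,
      VaR P (fun ω => ∑ i, X i ω) α ≤ ∑ i, VaR P (X i) α) :
    Comonotonic P X := by
  classical
  unfold Comonotonic ComonotonicSet
  intro x hx y hy hxy j
  by_contra hj
  push_neg at hj
  obtain ⟨i, hi⟩ := hxy
  have hx' : ∀ U : Set (Fin n → ℝ), IsOpen U → x ∈ U →
      0 < (P.map (fun ω k => X k ω)) U := hx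
  have hy' : ∀ U : Set (Fin n → ℝ), IsOpen U → y ∈ U →
      0 < (P.map (fun ω k => X k ω)) U := hy
  have hvec : Measurable (fun ω (k : Fin n) => X k ω) :=
    measurable_pi_lambda _ (fun k => hmeas k)
  set ε : ℝ := min ((y i - x i) / 3) ((x j - y j) / 3) with hεdef
  have hε0 : 0 < ε := lt_min (by linarith) (by linarith)
  have hsepi : x i + ε < y i - ε := by
    have h1 : ε ≤ (y i - x i) / 3 := min_le_left _ _
    linarith
  have hsepj : y j + ε < x j - ε := by
    have h1 : ε ≤ (x j - y j) / 3 := min_le_right _ _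
    linarith
  set Ux : Set (Fin n → ℝ) := Set.pi univ (fun k => Ioo (x k - ε) (x k + ε)) with hUxdef
  set Uy : Set (Fin n → ℝ) := Set.pi univ (fun k => Ioo (y k - ε) (y k + ε)) with hUydef
  have hUxo : IsOpen Ux := isOpen_set_pi finite_univ (fun k _ => isOpen_Ioo)
  have hUyo : IsOpen Uy := isOpen_set_pi finite_univ (fun k _ => isOpen_Ioo)
  have hUxm : MeasurableSet Ux := MeasurableSet.univ_pi (fun k => measurableSet_Ioo)
  have hUym : MeasurableSet Uy := MeasurableSet.univ_pi (fun k => measurableSet_Ioo)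
  have hxUx : x ∈ Ux := fun k _ => ⟨by linarith, by linarith⟩
  have hyUy : y ∈ Uy := fun k _ => ⟨by linarith, by linarith⟩
  set Ex : Set Ω := (fun ω (k : Fin n) => X k ω) ⁻¹' Ux with hExdef
  set Ey : Set Ω := (fun ω (k : Fin n) => X k ω) ⁻¹' Uy with hEydef
  have hExm : MeasurableSet Ex := hvec hUxm
  have hEym : MeasurableSet Ey := hvec hUym
  have hPEx : 0 < P Ex := by
    have h := hx' Ux hUxo hxUx
    rwa [Measure.map_apply hvec hUxm] at h
  have hPEy : 0 < P Ey := by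
    have h := hy' Uy hUyo hyUy
    rwa [Measure.map_apply hvec hUym] at h
  have hExbound : ∀ ω ∈ Ex, ∀ k, x k - ε < X k ω ∧ X k ω < x k + ε := by
    intro ω hω k
    exact hω k (mem_univ k)
  have hEybound : ∀ ω ∈ Ey, ∀ k, y k - ε < X k ω ∧ X k ω < y k + ε := by
    intro ω hω k
    exact hω k (mem_univ k)
  set px : ℝ := (P Ex).toReal with hpxdef
  set py : ℝ := (P Ey).toReal with hpydef
  have hpx : 0 < px := ENNReal.toReal_pos hPEx.ne' (measure_ne_top P _)
  have hpy : 0 < py := ENNReal.toReal_pos hPEy.ne' (measure_ne_top P _)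
  have hdisjxy : Disjoint Ex Ey := by
    rw [Set.disjoint_left]
    intro ω hωx hωy
    have h1 := (hExbound ω hωx i).2
    have h2 := (hEybound ω hωy i).1
    linarith
  have hpxy : px + py ≤ 1 := by
    have hu : P (Ex ∪ Ey) = P Ex + P Ey := measure_union hdisjxy hEym
    have hle : P (Ex ∪ Ey) ≤ 1 := prob_le_one
    rw [hu] at hle
    have := ENNReal.toReal_mono ENNReal.one_ne_top hle
    rwa [ENNReal.toReal_add (measure_ne_top _ _) (measure_ne_top _ _), ENNReal.toReal_one] at this
  -- the transition-level set
  set B : Set ℝ := {β | β ∈ Ioo (0:ℝ) 1 ∧ VaR P (X j) β < x j - ε} with hBdef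
  have hmemB : ∀ β : ℝ, 0 < β → β ≤ py → β ∈ B := by
    intro β h0 hβpy
    have hβ1 : β < 1 := by linarith
    refine ⟨⟨h0, hβ1⟩, ?_⟩
    have hq : VaR P (X j) β ≤ y j + ε := by
      rw [VaR_le_iff (hmeas j) h0 hβ1]
      have hsub2 : Ey ⊆ {ω | X j ω ≤ y j + ε} := fun ω hω => ((hEybound ω hω j).2).le
      have h2 : py ≤ distF P (X j) (y j + ε) :=
        ENNReal.toReal_mono (measure_ne_top P _) (measure_mono hsub2)
      linarith
    linarith
  have hupB : ∀ β ∈ B, β ≤ 1 - px := by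
    intro β hβ
    obtain ⟨⟨h0, h1⟩, hblt2⟩ := hβ
    have h2 : β ≤ distF P (X j) (VaR P (X j) β) := le_distF_VaR (hmeas j) h0 h1
    have hsub3 : {ω | X j ω ≤ VaR P (X j) β} ⊆ Exᶜ := by
      intro ω hω hωEx
      have hb := (hExbound ω hωEx j).1
      have hω' : X j ω ≤ VaR P (X j) β := hω
      have : VaR P (X j) β < x j - ε := hblt2
      linarith
    have h3 : distF P (X j) (VaR P (X j) β) ≤ (P Exᶜ).toReal :=
      ENNReal.toReal_mono (measure_ne_top P _) (measure_mono hsub3)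
    have h4 : (P Exᶜ).toReal = 1 - px := by
      rw [measure_compl hExm (measure_ne_top P _), measure_univ,
        ENNReal.toReal_sub_of_le prob_le_one ENNReal.one_ne_top, ENNReal.toReal_one]
    linarith
  have hBne : B.Nonempty := ⟨py, hmemB py hpy le_rfl⟩
  have hBbdd : BddAbove B := ⟨1 - px, fun β hβ => hupB β hβ⟩
  set βs : ℝ := sSup B with hβsdef
  have hβslb : py ≤ βs := le_csSup hBbdd (hmemB py hpy le_rfl)
  have hβsub : βs ≤ 1 - px := csSup_le hBne hupB
  have hβs0 : 0 < βs := lt_of_lt_of_le hpy hβslb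
  have hβs1 : βs < 1 := by linarith
  have hIooB : ∀ u : ℝ, 0 < u → u < βs → u ∈ B := by
    intro u h0 hu
    obtain ⟨b, hbB, hub⟩ := exists_lt_of_lt_csSup hBne hu
    obtain ⟨⟨hb0, hb1⟩, hblt⟩ := hbB
    exact ⟨⟨h0, lt_trans hub hb1⟩,
      lt_of_le_of_lt (VaR_mono (hmeas j) h0 hub.le hb1) hblt⟩
  have hnotB : ∀ u : ℝ, βs < u → u ∉ B :=
    fun u hu hB' => absurd (le_csSup hBbdd hB') (not_le.mpr hu)
  set δ : ℝ := px + py with hδdef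
  have hδ0 : 0 < δ := add_pos hpx hpy
  -- pick the good level β' just below βs
  set lo : ℝ := max (βs - δ/2) (βs/2) with hlodef
  have hlo0 : 0 ≤ lo := le_trans (by linarith) (le_max_right _ _)
  have hlolt : lo < βs := max_lt (by linarith) (by linarith)
  obtain ⟨β', hβ'mem, hgood'⟩ := exists_good_level hmeas hint hsub hlo0 hlolt (by linarith)
  have hβ'0 : 0 < β' := lt_of_lt_of_le (by linarith : (0:ℝ) < βs/2)
    ((le_max_right _ _).trans hβ'mem.1.le)
  have hβ'B : β' ∈ B := hIooB β' hβ'0 hβ'mem.2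
  have hβ'Ioo : β' ∈ Ioo (0:ℝ) 1 := ⟨hβ'0, by linarith [hβ'mem.2]⟩
  have hβ'lo : βs - δ/2 < β' := lt_of_le_of_lt (le_max_left _ _) hβ'mem.1
  -- pick the good level β'' just above βs
  set hi2 : ℝ := min (β' + δ) 1 with hhidef
  have hβslt : βs < hi2 := lt_min (by linarith) hβs1
  obtain ⟨β'', hβ''mem, hgood''⟩ :=
    exists_good_level hmeas hint hsub hβs0.le hβslt (min_le_right _ _)
  have hβ''Ioo : β'' ∈ Ioo (0:ℝ) 1 :=
    ⟨lt_trans hβs0 hβ''mem.1, lt_of_lt_of_le hβ''mem.2 (min_le_right _ _)⟩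
  have hβ''nB : β'' ∉ B := hnotB β'' hβ''mem.1
  have hβ'β'' : β' ≤ β'' := le_of_lt (lt_trans hβ'mem.2 hβ''mem.1)
  have hββδ : β'' < β' + δ := lt_of_lt_of_le hβ''mem.2 (min_le_left _ _)
  -- construct the nested sandwich sets
  have hS : Measurable (fun ω => ∑ k, X k ω) := Finset.measurable_sum _ (fun k _ => hmeas k)
  obtain ⟨A', A'', hA'm, hA''m, hsub12, hPA', hPA'', hS1', hS2', hS1'', hS2''⟩ :=
    construct_pair hP hS hβ'Ioo hβ''Ioo hβ'β''
  have hae := ae_VaR_sum_eq hmeas hint hsub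
  have hE' := extraction hmeas hint hβ'Ioo hgood' hae hA'm
    (fun ω hω => hS2' hω)
    (fun ω hω => by
      by_contra hcon
      push_neg at hcon
      exact hω (hS1' hcon))
  have hE'' := extraction hmeas hint hβ''Ioo hgood'' hae hA''m
    (fun ω hω => hS2'' hω)
    (fun ω hω => by
      by_contra hcon
      push_neg at hcon
      exact hω (hS1'' hcon))
  have hqjβ' : VaR P (X j) β' < x j - ε := hβ'B.2
  have hExA' : P (Ex \ A') = 0 := by
    apply measure_mono_null _ (hE' j).2
    rintro ω ⟨hωx, hωA⟩
    refine ⟨?_, hωA⟩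
    have hb := (hExbound ω hωx j).1
    show VaR P (X j) β' < X j ω
    linarith
  have hqiβ' : VaR P (X i) β' < x i + ε := by
    by_contra hcon
    push_neg at hcon
    have hcover : Ex ⊆ (Ex \ A') ∪ (A' ∩ {ω | X i ω < VaR P (X i) β'}) := by
      intro ω hω
      by_cases hA : ω ∈ A'
      · exact Or.inr ⟨hA, lt_of_lt_of_le ((hExbound ω hω i).2) hcon⟩
      · exact Or.inl ⟨hω, hA⟩
    have h0 : P ((Ex \ A') ∪ (A' ∩ {ω | X i ω < VaR P (X i) β'})) = 0 :=
      measure_union_null hExA' (hE' i).1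
    exact hPEx.ne' (le_antisymm ((measure_mono hcover).trans h0.le) (zero_le))
  have hEyA' : P (Ey \ A') = 0 := by
    apply measure_mono_null _ (hE' i).2
    rintro ω ⟨hωy, hωA⟩
    refine ⟨?_, hωA⟩
    have hb := (hEybound ω hωy i).1
    show VaR P (X i) β' < X i ω
    linarith
  have hqjβ'' : x j - ε ≤ VaR P (X j) β'' := by
    by_contra hcon
    push_neg at hcon
    exact hβ''nB ⟨hβ''Ioo, hcon⟩
  have hEyA'' : P (A'' ∩ Ey) = 0 := by
    apply measure_mono_null _ (hE'' j).1
    rintro ω ⟨hωA, hωy⟩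
    refine ⟨hωA, ?_⟩
    have hb := (hEybound ω hωy j).2
    show X j ω < VaR P (X j) β''
    linarith
  have hqiβ'' : y i - ε ≤ VaR P (X i) β'' := by
    by_contra hcon
    push_neg at hcon
    have hEy1 : P (Ey \ A'') = 0 := by
      apply measure_mono_null _ (hE'' i).2
      rintro ω ⟨hωy, hωA⟩
      refine ⟨?_, hωA⟩
      have hb := (hEybound ω hωy i).1
      show VaR P (X i) β'' < X i ω
      linarith
    have hcover : Ey ⊆ (Ey \ A'') ∪ (A'' ∩ Ey) := by
      intro ω hω
      by_cases hA : ω ∈ A''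
      · exact Or.inr ⟨hA, hω⟩
      · exact Or.inl ⟨hω, hA⟩
    have h0 : P ((Ey \ A'') ∪ (A'' ∩ Ey)) = 0 := measure_union_null hEy1 hEyA''
    exact hPEy.ne' (le_antisymm ((measure_mono hcover).trans h0.le) (zero_le))
  have hExA'' : P (A'' ∩ Ex) = 0 := by
    apply measure_mono_null _ (hE'' i).1
    rintro ω ⟨hωA, hωx⟩
    refine ⟨hωA, ?_⟩
    have hb := (hExbound ω hωx i).2
    show X i ω < VaR P (X i) β''
    linarith
  -- final measure counting
  have hcount1 : A'' ∪ (Ex ∪ Ey) ⊆ A' ∪ ((Ex \ A') ∪ (Ey \ A')) := by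
    intro ω hω
    rcases hω with hA | hxy
    · exact Or.inl (hsub12 hA)
    · rcases hxy with hx2 | hy2
      · by_cases hA : ω ∈ A'
        · exact Or.inl hA
        · exact Or.inr (Or.inl ⟨hx2, hA⟩)
      · by_cases hA : ω ∈ A'
        · exact Or.inl hA
        · exact Or.inr (Or.inr ⟨hy2, hA⟩)
  have h1 : P (A'' ∪ (Ex ∪ Ey)) ≤ ENNReal.ofReal (1 - β') := by
    refine le_trans (measure_mono hcount1) ?_
    refine le_trans (measure_union_le _ _) ?_
    rw [measure_union_null hExA' hEyA', add_zero, hPA']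
  have h2 : P (A'' ∪ (Ex ∪ Ey)) = ENNReal.ofReal (1 - β'') + (P Ex + P Ey) := by
    have hiz : P (A'' ∩ (Ex ∪ Ey)) = 0 := by
      rw [Set.inter_union_distrib_left]
      exact measure_union_null hExA'' hEyA''
    have hu := measure_union_add_inter (μ := P) A'' (hExm.union hEym)
    rw [hiz, add_zero] at hu
    rw [hu, hPA'', measure_union hdisjxy hEym]
  rw [h2] at h1
  have h3 := ENNReal.toReal_mono ENNReal.ofReal_ne_top h1
  rw [ENNReal.toReal_add ENNReal.ofReal_ne_top
      (ENNReal.add_ne_top.mpr ⟨measure_ne_top _ _, measure_ne_top _ _⟩),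
    ENNReal.toReal_add (measure_ne_top _ _) (measure_ne_top _ _),
    ENNReal.toReal_ofReal (by linarith [hβ''Ioo.2] : (0:ℝ) ≤ 1 - β''),
    ENNReal.toReal_ofReal (by linarith [hβ'Ioo.2] : (0:ℝ) ≤ 1 - β')] at h3
  have hfinal : β' + δ ≤ β'' := by
    have : (1 - β'') + (px + py) ≤ 1 - β' := h3
    simp only [hδdef]
    linarith
  linarith
end

section
/- If the random vector (X₁, …, Xₙ) is comonotonic, then for every α ∈ (0,1), VaR_α(X₁ + ⋯ + Xₙ) = VaR_α(X₁) + ⋯ + VaR_α(Xₙ). -/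
open MeasureTheory ProbabilityTheory Filter Topology
open scoped NNReal ENNReal

private lemma le_add_eps' {a b : ℝ} (h : ∀ ε : ℝ, 0 < ε → a ≤ b + ε) : a ≤ b := by
  by_contra h'
  push_neg at h'
  linarith [h ((a - b) / 2) (by linarith)]

private lemma measSupport_compl_null' {E : Type*} [TopologicalSpace E] [MeasurableSpace E]
    [SecondCountableTopology E] (μ : Measure E) : μ (measSupport μ)ᶜ = 0 := by
  obtain ⟨B, hBc, -, hB⟩ := TopologicalSpace.exists_countable_basis E
  have hnull : μ (⋃₀ {b ∈ B | μ b = 0}) = 0 :=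
    (measure_sUnion_null_iff (hBc.mono (Set.sep_subset _ _))).mpr fun s hs => hs.2
  refine measure_mono_null (fun x hx => ?_) hnull
  simp only [measSupport, Set.mem_compl_iff, Set.mem_setOf_eq, not_forall] at hx
  obtain ⟨U, hU, hxU, hμU⟩ := hx
  have hU0 : μ U = 0 := le_antisymm (not_lt.mp hμU) bot_le
  obtain ⟨b, hb, hxb, hbU⟩ := hB.exists_subset_of_mem_open hxU hU
  exact ⟨b, ⟨hb, le_antisymm (le_trans (measure_mono hbU) hU0.le) bot_le⟩, hxb⟩

private lemma exists_rel_top' {ι β : Type*} (r : β → β → Prop)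
    (htrans : ∀ {a b c}, r a b → r b c → r a c) (f : ι → β) :
    ∀ s : Finset ι, s.Nonempty →
      (∀ i ∈ s, ∀ j ∈ s, r (f i) (f j) ∨ r (f j) (f i)) →
      ∃ m ∈ s, ∀ i ∈ s, r (f i) (f m) := by
  classical
  intro s
  induction s using Finset.induction_on with
  | empty => intro hs _; exact absurd hs (by simp)
  | @insert a s ha ih =>
    intro _ htot
    rcases s.eq_empty_or_nonempty with rfl | hne
    · refine ⟨a, by simp, fun i hi => ?_⟩
      have hia : i = a := by simpa using hi
      rw [hia]
      rcases htot a (by simp) a (by simp) with h | h <;> exact h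
    · obtain ⟨m, hm, hmax⟩ := ih hne fun i hi j hj =>
        htot i (Finset.mem_insert_of_mem hi) j (Finset.mem_insert_of_mem hj)
      rcases htot a (Finset.mem_insert_self a s) m (Finset.mem_insert_of_mem hm) with h | h
      · refine ⟨m, Finset.mem_insert_of_mem hm, fun i hi => ?_⟩
        rcases Finset.mem_insert.mp hi with rfl | hi
        · exact h
        · exact hmax i hi
      · refine ⟨a, Finset.mem_insert_self a s, fun i hi => ?_⟩
        rcases Finset.mem_insert.mp hi with rfl | hi
        · rcases htot i (Finset.mem_insert_self i s) i (Finset.mem_insert_self i s) with h' | h' <;>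
            exact h'
        · exact htrans (hmax i hi) h

section VaRbasics

variable {Ω : Type*} [MeasurableSpace Ω] {P : Measure Ω} [IsProbabilityMeasure P]
  {X : Ω → ℝ} {α : ℝ}

private lemma distSet_mono' (P : Measure Ω) [IsProbabilityMeasure P] (X : Ω → ℝ) {x y : ℝ}
    (h : x ≤ y) : (P {ω | X ω ≤ x}).toReal ≤ (P {ω | X ω ≤ y}).toReal :=
  ENNReal.toReal_mono (measure_ne_top P _) (measure_mono fun ω hω => le_trans hω h)

private lemma var_set_nonempty' (hα0 : 0 < α) (hα1 : α < 1) :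
    {x : ℝ | α ≤ (P {ω | X ω ≤ x}).toReal}.Nonempty := by
  have hmono : Monotone fun k : ℕ => {ω | X ω ≤ (k : ℝ)} := by
    intro a b hab ω hω
    simp only [Set.mem_setOf_eq] at hω ⊢
    exact hω.trans (Nat.cast_le.mpr hab)
  have hunion : ⋃ k : ℕ, {ω | X ω ≤ (k : ℝ)} = Set.univ := by
    ext ω
    simp only [Set.mem_iUnion, Set.mem_univ, iff_true, Set.mem_setOf_eq]
    exact exists_nat_ge (X ω)
  have htend := tendsto_measure_iUnion_atTop (μ := P) (s := fun k : ℕ => {ω | X ω ≤ (k : ℝ)}) hmono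
  rw [hunion, measure_univ] at htend
  have hlt : ENNReal.ofReal α < 1 := ENNReal.ofReal_lt_one.mpr hα1
  obtain ⟨k, hk⟩ := (htend.eventually (eventually_gt_nhds hlt)).exists
  refine ⟨(k : ℝ), ?_⟩
  have h2 := ENNReal.toReal_mono (measure_ne_top P _) hk.le
  rwa [ENNReal.toReal_ofReal hα0.le] at h2

private lemma var_set_bddBelow' (hX : Measurable X) (hα0 : 0 < α) :
    BddBelow {x : ℝ | α ≤ (P {ω | X ω ≤ x}).toReal} := by
  have hanti : Antitone fun k : ℕ => {ω | X ω ≤ -(k : ℝ)} := by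
    intro a b hab ω hω
    simp only [Set.mem_setOf_eq] at hω ⊢
    exact hω.trans (neg_le_neg (Nat.cast_le.mpr hab))
  have hinter : ⋂ k : ℕ, {ω | X ω ≤ -(k : ℝ)} = ∅ := by
    ext ω
    simp only [Set.mem_iInter, Set.mem_empty_iff_false, iff_false, not_forall,
      Set.mem_setOf_eq, not_le]
    obtain ⟨k, hk⟩ := exists_nat_gt (-X ω)
    exact ⟨k, by linarith⟩
  have htend := tendsto_measure_iInter_atTop (μ := P) (s := fun k : ℕ => {ω | X ω ≤ -(k : ℝ)})
    (fun k => (hX measurableSet_Iic).nullMeasurableSet) hanti ⟨0, measure_ne_top P _⟩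
  rw [hinter, measure_empty] at htend
  have hpos : (0 : ℝ≥0∞) < ENNReal.ofReal α := ENNReal.ofReal_pos.mpr hα0
  obtain ⟨k, hk⟩ := (htend.eventually (eventually_lt_nhds hpos)).exists
  refine ⟨-(k : ℝ), fun y hy => ?_⟩
  by_contra hlt
  push_neg at hlt
  have h1 : (P {ω | X ω ≤ y}).toReal ≤ (P {ω | X ω ≤ -(k : ℝ)}).toReal :=
    distSet_mono' P X hlt.le
  have h2 : (P {ω | X ω ≤ -(k : ℝ)}).toReal < α := by
    have h3 := (ENNReal.toReal_lt_toReal (measure_ne_top P _) ENNReal.ofReal_ne_top).mpr hk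
    rwa [ENNReal.toReal_ofReal hα0.le] at h3
  have hy' : α ≤ (P {ω | X ω ≤ y}).toReal := hy
  linarith

private lemma VaR_le' (hX : Measurable X) (hα0 : 0 < α) {x : ℝ}
    (h : α ≤ (P {ω | X ω ≤ x}).toReal) : VaR P X α ≤ x :=
  csInf_le (var_set_bddBelow' hX hα0) h

private lemma mem_of_VaR_lt' (hα0 : 0 < α) (hα1 : α < 1) {x : ℝ}
    (h : VaR P X α < x) : α ≤ (P {ω | X ω ≤ x}).toReal := by
  obtain ⟨y, hy, hyx⟩ := exists_lt_of_csInf_lt (var_set_nonempty' hα0 hα1) h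
  exact le_trans hy (distSet_mono' P X hyx.le)

end VaRbasics

theorem comonotonic_VaR_additive {Ω : Type*} [MeasurableSpace Ω]
    (P : Measure Ω) [IsProbabilityMeasure P]
    {n : ℕ} (X : Fin n → Ω → ℝ) (hmeas : ∀ i, Measurable (X i))
    (hcom : Comonotonic P X) :
    ∀ α ∈ Set.Ioo (0 : ℝ) 1,
      VaR P (fun ω => ∑ i, X i ω) α = ∑ i, VaR P (X i) α := by
  classical
  intro α hα
  obtain ⟨hα0, hα1⟩ := hα
  rcases Nat.eq_zero_or_pos n with rfl | hn
  · -- trivial case n = 0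
    simp only [Finset.univ_eq_empty, Finset.sum_empty]
    have hset : {x : ℝ | α ≤ (P {ω | (0 : ℝ) ≤ x}).toReal} = Set.Ici 0 := by
      ext x
      rcases le_or_gt 0 x with hx | hx
      · have h1 : {ω : Ω | (0 : ℝ) ≤ x} = Set.univ := Set.eq_univ_of_forall fun ω => hx
        simp [h1, hα1.le, hx]
      · have h1 : {ω : Ω | (0 : ℝ) ≤ x} = ∅ := by ext ω; simp [hx.not_ge]
        simp [h1, hx.not_ge, hα0.not_ge]
    show sInf {x : ℝ | α ≤ (P {ω | (0 : ℝ) ≤ x}).toReal} = 0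
    rw [hset, csInf_Ici]
  · -- main case
    haveI : Nonempty (Fin n) := Fin.pos_iff_nonempty.mp hn
    set T : Ω → (Fin n → ℝ) := fun ω i => X i ω with hTdef
    have hT : Measurable T := measurable_pi_iff.mpr hmeas
    set μ : Measure (Fin n → ℝ) := P.map T with hμdef
    haveI : IsProbabilityMeasure μ := Measure.isProbabilityMeasure_map hT.aemeasurable
    set S : Set (Fin n → ℝ) := measSupport μ with hSdef
    have hS0 : μ Sᶜ = 0 := measSupport_compl_null' μ
    have hchain : ∀ x ∈ S, ∀ y ∈ S, (∀ j, x j ≤ y j) ∨ (∀ j, y j ≤ x j) := by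
      intro x hx y hy
      by_cases h : ∀ j, x j ≤ y j
      · exact Or.inl h
      · push_neg at h
        obtain ⟨j, hj⟩ := h
        exact Or.inr (hcom y hy x hx ⟨j, hj⟩)
    have msI : ∀ (i : Fin n) (t : ℝ), MeasurableSet {x : Fin n → ℝ | x i ≤ t} := fun i t =>
      measurableSet_le (measurable_pi_apply i) measurable_const
    have msSum : ∀ t : ℝ, MeasurableSet {x : Fin n → ℝ | ∑ i, x i ≤ t} := fun t =>
      measurableSet_le (Finset.measurable_sum Finset.univ fun i _ => measurable_pi_apply i)
        measurable_const
    have hsummeas : Measurable fun ω => ∑ i, X i ω :=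
      Finset.measurable_sum Finset.univ fun i _ => hmeas i
    have hXi : ∀ (i : Fin n) (t : ℝ), P {ω | X i ω ≤ t} = μ {x | x i ≤ t} := by
      intro i t
      rw [hμdef, Measure.map_apply hT (msI i t)]
      rfl
    have hXsum : ∀ t : ℝ, P {ω | ∑ i, X i ω ≤ t} = μ {x | ∑ i, x i ≤ t} := by
      intro t
      rw [hμdef, Measure.map_apply hT (msSum t)]
      rfl
    -- measure comparison modulo the support
    have hmodS : ∀ A B : Set (Fin n → ℝ), A ∩ S ⊆ B → μ A ≤ μ B := by
      intro A B hAB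
      calc μ A ≤ μ (A ∩ S) + μ (A \ S) := measure_le_inter_add_diff μ A S
        _ ≤ μ B + μ Sᶜ := add_le_add (measure_mono hAB) (measure_mono fun x hx => hx.2)
        _ = μ B := by rw [hS0, add_zero]
    set q : Fin n → ℝ := fun i => VaR P (X i) α with hqdef
    have hupper : VaR P (fun ω => ∑ i, X i ω) α ≤ ∑ i, q i := by
      apply le_add_eps'
      intro ε hε
      set δ : ℝ := ε / n with hδdef
      have hδ : 0 < δ := div_pos hε (by exact_mod_cast hn)
      set C : Fin n → Set (Fin n → ℝ) := fun i => {x | x i ≤ q i + δ} ∩ S with hCdef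
      have hCC : ∀ i j, C i ⊆ C j ∨ C j ⊆ C i := by
        intro i j
        by_contra hcon
        push_neg at hcon
        obtain ⟨h1, h2⟩ := hcon
        obtain ⟨x, hxCi, hxCj⟩ := Set.not_subset.mp h1
        obtain ⟨y, hyCj, hyCi⟩ := Set.not_subset.mp h2
        have hxS : x ∈ S := hxCi.2
        have hyS : y ∈ S := hyCj.2
        have hxj : q j + δ < x j := by
          by_contra h
          exact hxCj ⟨not_lt.mp h, hxS⟩
        have hyi : q i + δ < y i := by
          by_contra h
          exact hyCi ⟨not_lt.mp h, hyS⟩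
        rcases hchain x hxS y hyS with h | h
        · exact absurd (h j) (not_le.mpr (lt_of_le_of_lt hyCj.1 hxj))
        · exact absurd (h i) (not_le.mpr (lt_of_le_of_lt hxCi.1 hyi))
      obtain ⟨k, -, hk⟩ := exists_rel_top' (fun A B : Set (Fin n → ℝ) => B ⊆ A)
        (fun h1 h2 => h2.trans h1) C Finset.univ Finset.univ_nonempty
        (fun i _ j _ => (hCC j i))
      have hkmem : α ≤ (P {ω | X k ω ≤ q k + δ}).toReal :=
        mem_of_VaR_lt' hα0 hα1 (lt_add_of_pos_right _ hδ)
      have hsub : {x : Fin n → ℝ | x k ≤ q k + δ} ∩ S ⊆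
          {x : Fin n → ℝ | ∑ i, x i ≤ (∑ i, q i) + ε} := by
        intro x hx
        have hxall : ∀ i, x i ≤ q i + δ := by
          intro i
          have := hk i (Finset.mem_univ i)
          exact (this hx).1
        have : ∑ i, x i ≤ ∑ i, (q i + δ) := Finset.sum_le_sum fun i _ => hxall i
        calc ∑ i, x i ≤ ∑ i, (q i + δ) := this
          _ = (∑ i, q i) + n * δ := by
              rw [Finset.sum_add_distrib, Finset.sum_const, Finset.card_univ, Fintype.card_fin,
                nsmul_eq_mul]
          _ = (∑ i, q i) + ε := by
              rw [hδdef, mul_div_cancel₀]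
              exact_mod_cast hn.ne'
      have hμle : μ {x | x k ≤ q k + δ} ≤ μ {x | ∑ i, x i ≤ (∑ i, q i) + ε} := hmodS _ _ hsub
      apply VaR_le' hsummeas hα0
      rw [hXsum]
      calc α ≤ (P {ω | X k ω ≤ q k + δ}).toReal := hkmem
        _ = (μ {x | x k ≤ q k + δ}).toReal := by rw [hXi]
        _ ≤ (μ {x | ∑ i, x i ≤ (∑ i, q i) + ε}).toReal :=
            ENNReal.toReal_mono (measure_ne_top μ _) hμle
    have hlower : ∑ i, q i ≤ VaR P (fun ω => ∑ i, X i ω) α := by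
      apply le_csInf (var_set_nonempty' hα0 hα1)
      intro u hu
      have hu' : α ≤ (μ {x | ∑ i, x i ≤ u}).toReal := by
        rw [← hXsum]; exact hu
      set B : Set (Fin n → ℝ) := {x | ∑ i, x i ≤ u} with hBdef
      set D : Set (Fin n → ℝ) := B ∩ S with hDdef
      have hBD : μ B ≤ μ D := hmodS B D fun x hx => hx
      have hDne : D.Nonempty := by
        apply nonempty_of_measure_ne_zero (μ := μ)
        intro h0
        rw [h0] at hBD
        have : μ B = 0 := le_antisymm hBD bot_le
        rw [this] at hu'
        simp only [ENNReal.toReal_zero] at hu'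
        linarith
      obtain ⟨x0, hx0⟩ := hDne
      have hbdd : ∀ i : Fin n, BddAbove ((fun x : Fin n → ℝ => x i) '' D) := by
        intro i
        refine ⟨max (x0 i) (u - ∑ j ∈ Finset.univ.erase i, x0 j), ?_⟩
        rintro - ⟨x, hxD, rfl⟩
        rcases hchain x hxD.2 x0 hx0.2 with h | h
        · exact le_max_of_le_left (h i)
        · refine le_max_of_le_right ?_
          have hsx : x i + ∑ j ∈ Finset.univ.erase i, x j = ∑ j, x j :=
            Finset.add_sum_erase Finset.univ x (Finset.mem_univ i)
          have h2 : ∑ j ∈ Finset.univ.erase i, x0 j ≤ ∑ j ∈ Finset.univ.erase i, x j :=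
            Finset.sum_le_sum fun j _ => h j
          have h3 : ∑ j, x j ≤ u := hxD.1
          linarith
      set t : Fin n → ℝ := fun i => sSup ((fun x : Fin n → ℝ => x i) '' D) with htdef
      have hqt : ∀ i, q i ≤ t i := by
        intro i
        apply VaR_le' (hmeas i) hα0
        rw [hXi]
        have hsub : D ⊆ {x | x i ≤ t i} := fun x hx =>
          le_csSup (hbdd i) ⟨x, hx, rfl⟩
        calc α ≤ (μ B).toReal := hu'
          _ ≤ (μ {x | x i ≤ t i}).toReal :=
              ENNReal.toReal_mono (measure_ne_top μ _)
                (le_trans hBD (measure_mono hsub))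
      have htu : ∑ i, t i ≤ u := by
        apply le_add_eps'
        intro ε hε
        set δ : ℝ := ε / n with hδdef
        have hδ : 0 < δ := div_pos hε (by exact_mod_cast hn)
        have hz : ∀ i : Fin n, ∃ x ∈ D, t i - δ < x i := by
          intro i
          obtain ⟨y, hy, hy2⟩ := exists_lt_of_lt_csSup
            (Set.Nonempty.image _ ⟨x0, hx0⟩) (sub_lt_self (t i) hδ)
          obtain ⟨x, hxD, rfl⟩ := hy
          exact ⟨x, hxD, hy2⟩
        choose z hzD hzlt using hz
        obtain ⟨m, -, hm⟩ := exists_rel_top' (fun a b : Fin n → ℝ => ∀ j, a j ≤ b j)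
          (fun h1 h2 j => le_trans (h1 j) (h2 j)) z Finset.univ Finset.univ_nonempty
          (fun i _ j _ => hchain (z i) (hzD i).2 (z j) (hzD j).2)
        have hsum : ∑ i, t i ≤ ∑ i, (z m i + δ) := by
          apply Finset.sum_le_sum
          intro i _
          have h1 : t i - δ < z i i := hzlt i
          have h2 : z i i ≤ z m i := hm i (Finset.mem_univ i) i
          linarith
        have h3 : ∑ i, (z m i + δ) = (∑ i, z m i) + ε := by
          rw [Finset.sum_add_distrib, Finset.sum_const, Finset.card_univ, Fintype.card_fin,
            nsmul_eq_mul, hδdef, mul_div_cancel₀]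
          exact_mod_cast hn.ne'
        have h4 : ∑ i, z m i ≤ u := (hzD m).1
        linarith
      calc ∑ i, q i ≤ ∑ i, t i := Finset.sum_le_sum fun i _ => hqt i
        _ ≤ u := htu
    exact le_antisymm hupper hlower
end

section
/- Let (Ω, ℱ, P) be an atomless probability space and X₁, …, Xₙ integrable random variables. Then the subadditivity VaR_α(∑ᵢ Xᵢ) ≤ ∑ᵢ VaR_α(Xᵢ) for all α ∈ (0,1) holds if and only if the additivity VaR_α(∑ᵢ Xᵢ) = ∑ᵢ VaR_α(Xᵢ) holds for all α ∈ (0,1). -/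
open MeasureTheory ProbabilityTheory
open scoped NNReal

open MeasureTheory ProbabilityTheory Set Filter
open scoped NNReal

section Quantile

/-- Left-continuous quantile function of a measure on `ℝ`. -/
noncomputable def qf (μ : Measure ℝ) (α : ℝ) : ℝ := sInf {x | α ≤ cdf μ x}

variable {μ : Measure ℝ}

lemma qf_set_nonempty (hμ : IsProbabilityMeasure μ) {α : ℝ} (hα : α < 1) :
    {x | α ≤ cdf μ x}.Nonempty := by
  have h := (tendsto_cdf_atTop μ).eventually (eventually_ge_nhds hα)
  exact h.exists

lemma qf_bddBelow (hμ : IsProbabilityMeasure μ) {α : ℝ} (hα : 0 < α) :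
    BddBelow {x | α ≤ cdf μ x} := by
  have h := (tendsto_cdf_atBot μ).eventually (eventually_lt_nhds hα)
  obtain ⟨m, hm⟩ := (eventually_atBot).1 h
  refine ⟨m, fun y hy => ?_⟩
  by_contra hmy
  exact absurd hy (not_le.2 (hm y (le_of_lt (not_le.1 hmy))))

lemma le_cdf_qf (hμ : IsProbabilityMeasure μ) {α : ℝ} (hα : α ∈ Ioo (0:ℝ) 1) :
    α ≤ cdf μ (qf μ α) := by
  have hne := qf_set_nonempty hμ hα.2
  have hrc : Tendsto (cdf μ) (nhdsWithin (qf μ α) (Ioi (qf μ α))) (nhds (cdf μ (qf μ α))) :=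
    ((cdf μ).right_continuous (qf μ α)).mono_left (nhdsWithin_mono _ Ioi_subset_Ici_self)
  refine ge_of_tendsto hrc ?_
  refine Filter.Eventually.mono self_mem_nhdsWithin (fun y hy => ?_)
  obtain ⟨x, hxS, hxy⟩ := exists_lt_of_csInf_lt hne hy
  exact le_trans hxS (monotone_cdf μ hxy.le)

lemma qf_le_iff (hμ : IsProbabilityMeasure μ) {α x : ℝ} (hα : α ∈ Ioo (0:ℝ) 1) :
    qf μ α ≤ x ↔ α ≤ cdf μ x := by
  constructor
  · intro h
    exact le_trans (le_cdf_qf hμ hα) (monotone_cdf μ h)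
  · intro h
    exact csInf_le (qf_bddBelow hμ hα.1) h

lemma qf_monotoneOn (hμ : IsProbabilityMeasure μ) : MonotoneOn (qf μ) (Ioo (0:ℝ) 1) := by
  intro a ha b hb hab
  exact (qf_le_iff hμ ha).2 (le_trans hab (le_cdf_qf hμ hb))

/-- Measurable version of the quantile function (indicator on `(0,1)`). -/
noncomputable def qf1 (μ : Measure ℝ) : ℝ → ℝ := (Ioo (0:ℝ) 1).indicator (qf μ)

lemma measurable_qf1 (hμ : IsProbabilityMeasure μ) : Measurable (qf1 μ) := by
  apply measurable_of_Iic
  intro x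
  by_cases h0 : (0:ℝ) ≤ x
  · have : qf1 μ ⁻¹' Iic x = (Ioo (0:ℝ) 1 ∩ Iic (cdf μ x)) ∪ (Ioo (0:ℝ) 1)ᶜ := by
      ext α
      by_cases hα : α ∈ Ioo (0:ℝ) 1
      · simp [qf1, Set.indicator_of_mem hα, hα, qf_le_iff hμ hα]
      · simp [qf1, Set.indicator_of_notMem hα, hα, h0]
    rw [this]
    exact ((measurableSet_Ioo.inter measurableSet_Iic).union measurableSet_Ioo.compl)
  · have : qf1 μ ⁻¹' Iic x = Ioo (0:ℝ) 1 ∩ Iic (cdf μ x) := by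
      ext α
      by_cases hα : α ∈ Ioo (0:ℝ) 1
      · simp [qf1, Set.indicator_of_mem hα, hα, qf_le_iff hμ hα]
      · simp [qf1, Set.indicator_of_notMem hα, hα, h0]
    rw [this]
    exact measurableSet_Ioo.inter measurableSet_Iic

lemma qf1_ae_eq : qf1 μ =ᵐ[volume.restrict (Ioo (0:ℝ) 1)] qf μ := by
  filter_upwards [ae_restrict_mem measurableSet_Ioo] with α hα
  exact Set.indicator_of_mem hα _

lemma map_qf1 (hμ : IsProbabilityMeasure μ) :
    (volume.restrict (Ioo (0:ℝ) 1)).map (qf1 μ) = μ := by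
  haveI := hμ
  have hm := measurable_qf1 hμ
  haveI : IsProbabilityMeasure ((volume.restrict (Ioo (0:ℝ) 1)).map (qf1 μ)) := by
    constructor
    rw [Measure.map_apply hm MeasurableSet.univ]
    simp [Real.volume_Ioo]
  refine Measure.ext_of_Iic _ _ (fun x => ?_)
  rw [Measure.map_apply hm measurableSet_Iic,
    Measure.restrict_apply (hm measurableSet_Iic)]
  have hset : qf1 μ ⁻¹' Iic x ∩ Ioo (0:ℝ) 1 = Ioo (0:ℝ) 1 ∩ Iic (cdf μ x) := by
    ext α
    constructor
    · rintro ⟨h1, h2⟩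
      refine ⟨h2, ?_⟩
      have : qf μ α ≤ x := by simpa [qf1, Set.indicator_of_mem h2] using h1
      exact (qf_le_iff hμ h2).1 this
    · rintro ⟨h2, h1⟩
      refine ⟨?_, h2⟩
      have : qf μ α ≤ x := (qf_le_iff hμ h2).2 h1
      simpa [qf1, Set.indicator_of_mem h2] using this
  rw [hset, ← ofReal_cdf μ x]
  rcases lt_or_ge (cdf μ x) 1 with hc | hc
  · have : Ioo (0:ℝ) 1 ∩ Iic (cdf μ x) = Ioc 0 (cdf μ x) := by
      ext α
      constructor
      · rintro ⟨⟨h1, _⟩, h3⟩; exact ⟨h1, h3⟩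
      · rintro ⟨h1, h3⟩; exact ⟨⟨h1, lt_of_le_of_lt h3 hc⟩, h3⟩
    rw [this, Real.volume_Ioc, sub_zero]
  · have : Ioo (0:ℝ) 1 ∩ Iic (cdf μ x) = Ioo 0 1 := by
      refine Set.inter_eq_self_of_subset_left (fun α hα => ?_)
      exact le_trans hα.2.le hc
    rw [this, Real.volume_Ioo, sub_zero]
    have hc1 : cdf μ x = 1 := le_antisymm (cdf_le_one μ x) hc
    rw [hc1]

lemma qf_integrableOn (hμ : IsProbabilityMeasure μ) (hint : Integrable id μ) :
    IntegrableOn (qf μ) (Ioo (0:ℝ) 1) volume := by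
  have hm := measurable_qf1 hμ
  have h1 : Integrable (qf1 μ) (volume.restrict (Ioo (0:ℝ) 1)) := by
    have := (integrable_map_measure (aestronglyMeasurable_id (μ := (volume.restrict (Ioo (0:ℝ) 1)).map (qf1 μ))) hm.aemeasurable).1
    rw [map_qf1 hμ] at this
    exact this hint
  exact h1.congr qf1_ae_eq

lemma qf_integral (hμ : IsProbabilityMeasure μ) (hint : Integrable id μ) :
    ∫ α in Ioo (0:ℝ) 1, qf μ α = ∫ x, x ∂μ := by
  have hm := measurable_qf1 hμ
  rw [← integral_congr_ae qf1_ae_eq]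
  have : ∫ x, x ∂((volume.restrict (Ioo (0:ℝ) 1)).map (qf1 μ)) = ∫ α in Ioo (0:ℝ) 1, qf1 μ α := by
    exact integral_map hm.aemeasurable aestronglyMeasurable_id
  rw [map_qf1 hμ] at this
  exact this.symm

lemma VaR_eq_qf {Ω : Type*} [MeasurableSpace Ω] (P : Measure Ω) [IsProbabilityMeasure P]
    {X : Ω → ℝ} (hX : Measurable X) (α : ℝ) : VaR P X α = qf (P.map X) α := by
  haveI : IsProbabilityMeasure (P.map X) := Measure.isProbabilityMeasure_map hX.aemeasurable
  unfold VaR qf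
  congr 1
  ext x
  simp only [Set.mem_setOf_eq, cdf_eq_real, measureReal_def, Measure.map_apply hX measurableSet_Iic]
  rfl

end Quantile

theorem VaR_subadditive_iff_additive {Ω : Type*} [MeasurableSpace Ω]
    (P : Measure Ω) [IsProbabilityMeasure P] (hP : Atomless P)
    {n : ℕ} (X : Fin n → Ω → ℝ) (hmeas : ∀ i, Measurable (X i))
    (hint : ∀ i, Integrable (X i) P) :
    (∀ α ∈ Set.Ioo (0 : ℝ) 1,
        VaR P (fun ω => ∑ i, X i ω) α ≤ ∑ i, VaR P (X i) α) ↔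
    (∀ α ∈ Set.Ioo (0 : ℝ) 1,
        VaR P (fun ω => ∑ i, X i ω) α = ∑ i, VaR P (X i) α) := by
  constructor
  swap
  · intro h α hα; exact (h α hα).le
  intro hsub
  have hSm : Measurable (fun ω => ∑ i, X i ω) := Finset.measurable_sum _ (fun i _ => hmeas i)
  have hμSp : IsProbabilityMeasure (P.map (fun ω => ∑ i, X i ω)) :=
    Measure.isProbabilityMeasure_map hSm.aemeasurable
  have hμp : ∀ i, IsProbabilityMeasure (P.map (X i)) :=
    fun i => Measure.isProbabilityMeasure_map (hmeas i).aemeasurable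
  set f : ℝ → ℝ := qf (P.map (fun ω => ∑ i, X i ω)) with hfdef
  set g : ℝ → ℝ := fun β => ∑ i, qf (P.map (X i)) β with hgdef
  have h1 : ∀ β ∈ Set.Ioo (0:ℝ) 1, f β ≤ g β := by
    intro β hβ
    have h2 := hsub β hβ
    rw [VaR_eq_qf P hSm] at h2
    refine le_trans h2 (le_of_eq ?_)
    exact Finset.sum_congr rfl (fun i _ => VaR_eq_qf P (hmeas i) β)
  have hintS : Integrable id (P.map (fun ω => ∑ i, X i ω)) := by
    refine (integrable_map_measure aestronglyMeasurable_id hSm.aemeasurable).2 ?_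
    exact (integrable_finset_sum _ (fun i _ => hint i) : Integrable (fun ω => ∑ i, X i ω) P)
  have hinti : ∀ i, Integrable id (P.map (X i)) := fun i =>
    (integrable_map_measure aestronglyMeasurable_id (hmeas i).aemeasurable).2
      ((hint i) : Integrable (X i) P)
  have hintf : IntegrableOn f (Set.Ioo (0:ℝ) 1) volume := qf_integrableOn hμSp hintS
  have hintgi : ∀ i, IntegrableOn (qf (P.map (X i))) (Set.Ioo (0:ℝ) 1) volume :=
    fun i => qf_integrableOn (hμp i) (hinti i)
  have hintg : IntegrableOn g (Set.Ioo (0:ℝ) 1) volume := by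
    rw [hgdef]
    exact integrable_finset_sum _ (fun i _ => hintgi i)
  have hIS : ∫ α in Set.Ioo (0:ℝ) 1, f α = ∫ ω, (∑ i, X i ω) ∂P := by
    rw [hfdef, qf_integral hμSp hintS]
    exact integral_map hSm.aemeasurable aestronglyMeasurable_id
  have hIgi : ∀ i, ∫ α in Set.Ioo (0:ℝ) 1, qf (P.map (X i)) α = ∫ ω, X i ω ∂P := by
    intro i
    rw [qf_integral (hμp i) (hinti i)]
    exact integral_map (hmeas i).aemeasurable aestronglyMeasurable_id
  have hIeq : ∫ α in Set.Ioo (0:ℝ) 1, f α = ∫ α in Set.Ioo (0:ℝ) 1, g α := by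
    rw [hIS, integral_finset_sum _ (fun i _ => hint i), hgdef,
      integral_finset_sum _ (fun i _ => hintgi i)]
    exact Finset.sum_congr rfl (fun i _ => (hIgi i).symm)
  have hae : (fun α => g α - f α) =ᵐ[volume.restrict (Set.Ioo (0:ℝ) 1)] 0 := by
    have hnn : 0 ≤ᵐ[volume.restrict (Set.Ioo (0:ℝ) 1)] fun α => g α - f α := by
      filter_upwards [ae_restrict_mem measurableSet_Ioo] with α hα
      simpa using sub_nonneg.2 (h1 α hα)
    have hI0 : ∫ α in Set.Ioo (0:ℝ) 1, (g α - f α) = 0 := by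
      rw [integral_sub hintg hintf, hIeq, sub_self]
    exact (integral_eq_zero_iff_of_nonneg_ae hnn (hintg.sub hintf)).1 hI0
  intro α₀ hα₀
  rw [VaR_eq_qf P hSm, show ∑ i, VaR P (X i) α₀ = g α₀ from
    Finset.sum_congr rfl (fun i _ => VaR_eq_qf P (hmeas i) α₀)]
  by_contra hne
  have hlt : f α₀ < g α₀ := lt_of_le_of_ne (h1 α₀ hα₀) hne
  set gap := g α₀ - f α₀ with hgapdef
  have hgap : 0 < gap := sub_pos.2 hlt
  set ε := gap / ((n : ℝ) + 1) with hεdef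
  have hε : 0 < ε := div_pos hgap (by positivity)
  set c : Fin n → ℝ := fun i => cdf (P.map (X i)) (qf (P.map (X i)) α₀ - ε) with hcdef
  have hci : ∀ i, c i < α₀ := by
    intro i
    by_contra hle
    have h2 : qf (P.map (X i)) α₀ ≤ qf (P.map (X i)) α₀ - ε :=
      (qf_le_iff (hμp i) hα₀).2 (le_of_not_gt hle)
    linarith
  set C : ℝ := max 0 (⨆ i, c i) with hCdef
  have hC1 : ∀ i, c i ≤ C := fun i =>
    le_trans (le_ciSup (Set.Finite.bddAbove (Set.finite_range c)) i) (le_max_right _ _)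
  have hC2 : C < α₀ := by
    rcases isEmpty_or_nonempty (Fin n) with hn | hn
    · rw [hCdef, Real.iSup_of_isEmpty]
      simpa using hα₀.1
    · obtain ⟨j, hj⟩ := Finite.exists_max c
      exact max_lt hα₀.1 (lt_of_le_of_lt (ciSup_le hj) (hci j))
  have hC0 : 0 ≤ C := le_max_left _ _
  have hTsub : Set.Ioo C α₀ ⊆ Set.Ioo (0:ℝ) 1 := fun β hβ =>
    ⟨lt_of_le_of_lt hC0 hβ.1, lt_trans hβ.2 hα₀.2⟩
  have hnε : (n : ℝ) * ε < gap := by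
    have h1' : ((n:ℝ) + 1) * ε = gap := by
      rw [hεdef]; field_simp
    nlinarith [hε]
  have hTlt : ∀ β ∈ Set.Ioo C α₀, f β < g β := by
    intro β hβ
    have hβ01 := hTsub hβ
    have hfb : f β ≤ f α₀ := qf_monotoneOn hμSp hβ01 hα₀ hβ.2.le
    have hgb : ∀ i, qf (P.map (X i)) α₀ - ε ≤ qf (P.map (X i)) β := by
      intro i
      by_contra hle
      have h2 := (qf_le_iff (hμp i) hβ01).1 (le_of_lt (not_le.1 hle))
      exact absurd h2 (not_le.2 (lt_of_le_of_lt (hC1 i) hβ.1))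
    have hsum : g α₀ - (n : ℝ) * ε ≤ g β := by
      have h3 : ∑ i, (qf (P.map (X i)) α₀ - ε) ≤ ∑ i, qf (P.map (X i)) β :=
        Finset.sum_le_sum (fun i _ => hgb i)
      rw [Finset.sum_sub_distrib, Finset.sum_const, Finset.card_univ, Fintype.card_fin,
        nsmul_eq_mul] at h3
      exact h3
    have hkey : f α₀ < g α₀ - (n : ℝ) * ε := by
      rw [hgapdef] at hnε
      linarith
    exact lt_of_le_of_lt hfb (lt_of_lt_of_le hkey hsum)
  have h0 : volume.restrict (Set.Ioo (0:ℝ) 1) {α | ¬ (g α - f α = 0)} = 0 := by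
    have := ae_iff.1 hae
    simpa using this
  have hsub2 : Set.Ioo C α₀ ⊆ {α | ¬ (g α - f α = 0)} := fun β hβ =>
    sub_ne_zero.2 (hTlt β hβ).ne'
  have hzero : volume.restrict (Set.Ioo (0:ℝ) 1) (Set.Ioo C α₀) = 0 :=
    le_antisymm (h0 ▸ measure_mono hsub2) zero_le
  rw [Measure.restrict_apply measurableSet_Ioo,
    Set.inter_eq_self_of_subset_left hTsub, Real.volume_Ioo] at hzero
  have := ENNReal.ofReal_eq_zero.1 hzero
  linarith
end

section
/- Let X₁, …, Xₙ be integrable random variables satisfying VaR_α(∑ᵢ Xᵢ) ≤ ∑ᵢ VaR_α(Xᵢ) for all α ∈ (0,1), on an atomless probability space. Let U be uniform on (0,1) with S := ∑ᵢ Xᵢ = F_S^{-1}(U) a.s., and set X̂ᵢ := F_{Xᵢ}^{-1}(U). Then ∑ᵢ X̂ᵢ = S almost surely. -/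
open MeasureTheory ProbabilityTheory
open scoped NNReal

open Set Filter Topology
noncomputable def quant (μ : Measure ℝ) (α : ℝ) : ℝ := sInf {x | α ≤ cdf μ x}

section quantlemmas
variable {μ : Measure ℝ} [IsProbabilityMeasure μ]

omit [IsProbabilityMeasure μ] in
lemma quant_set_nonempty {α : ℝ} (hα : α < 1) : {x | α ≤ cdf μ x}.Nonempty := by
  obtain ⟨y, hy⟩ := ((tendsto_cdf_atTop μ).eventually (eventually_gt_nhds hα)).exists
  exact ⟨y, hy.le⟩

omit [IsProbabilityMeasure μ] in
lemma quant_set_bddBelow {α : ℝ} (hα : 0 < α) : BddBelow {x | α ≤ cdf μ x} := by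
  obtain ⟨z, hz⟩ := ((tendsto_cdf_atBot μ).eventually (eventually_lt_nhds hα)).exists
  exact ⟨z, fun y hy => le_of_not_gt fun h => absurd (le_trans hy (monotone_cdf μ h.le)) hz.not_ge⟩

omit [IsProbabilityMeasure μ] in
lemma le_cdf_quant {α : ℝ} (hα0 : 0 < α) (hα1 : α < 1) : α ≤ cdf μ (quant μ α) := by
  set S := {x | α ≤ cdf μ x}
  have hne := quant_set_nonempty (μ := μ) hα1
  have hbd := quant_set_bddBelow (μ := μ) hα0
  have hcl : sInf S ∈ closure S := csInf_mem_closure hne hbd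
  have hsub : S ⊆ Ici (sInf S) := fun y hy => csInf_le hbd hy
  have hc : ContinuousWithinAt (cdf μ) S (sInf S) :=
    ((cdf μ).right_continuous (sInf S)).mono hsub
  have ht : Tendsto (cdf μ) (𝓝[S] (sInf S)) (𝓝 (cdf μ (sInf S))) := hc
  have hne' : (𝓝[S] (sInf S)).NeBot := mem_closure_iff_nhdsWithin_neBot.mp hcl
  exact ge_of_tendsto ht (eventually_mem_nhdsWithin.mono fun y hy => hy)

omit [IsProbabilityMeasure μ] in
lemma quant_le_iff {α x : ℝ} (hα0 : 0 < α) (hα1 : α < 1) :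
    quant μ α ≤ x ↔ α ≤ cdf μ x := by
  constructor
  · intro h
    exact (le_cdf_quant hα0 hα1).trans (monotone_cdf μ h)
  · intro h
    exact csInf_le (quant_set_bddBelow hα0) h

omit [IsProbabilityMeasure μ] in
lemma quant_monotoneOn : MonotoneOn (quant μ) (Ioo (0:ℝ) 1) := by
  intro a ha b hb hab
  exact csInf_le_csInf (quant_set_bddBelow ha.1) (quant_set_nonempty hb.2)
    (fun x hx => hab.trans hx)

lemma quant_map_eq : (volume.restrict (Ioo (0:ℝ) 1)).map (quant μ) = μ := by
  have hae : AEMeasurable (quant μ) (volume.restrict (Ioo (0:ℝ) 1)) :=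
    aemeasurable_restrict_of_monotoneOn measurableSet_Ioo quant_monotoneOn
  refine Measure.ext_of_Iic _ _ (fun x => ?_)
  rw [Measure.map_apply_of_aemeasurable hae measurableSet_Iic,
    Measure.restrict_apply₀' measurableSet_Ioo.nullMeasurableSet]
  have hset : quant μ ⁻¹' Iic x ∩ Ioo 0 1 = Iic (cdf μ x) ∩ Ioo 0 1 := by
    ext α
    simp only [mem_inter_iff, mem_preimage, mem_Iic, mem_Ioo, and_congr_left_iff]
    intro hα
    exact quant_le_iff hα.1 hα.2
  rw [hset, ← ofReal_cdf μ x]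
  have h0 : 0 ≤ cdf μ x := cdf_nonneg μ x
  rcases lt_or_eq_of_le (cdf_le_one μ x) with h1 | h1
  · have : Iic (cdf μ x) ∩ Ioo (0:ℝ) 1 = Ioc 0 (cdf μ x) := by
      ext α; simp only [mem_inter_iff, mem_Iic, mem_Ioo, mem_Ioc]
      constructor
      · rintro ⟨h, h2, h3⟩; exact ⟨h2, h⟩
      · rintro ⟨h2, h⟩; exact ⟨h, h2, lt_of_le_of_lt h h1⟩
    rw [this, Real.volume_Ioc, sub_zero]
  · have : Iic (cdf μ x) ∩ Ioo (0:ℝ) 1 = Ioo (0:ℝ) 1 := by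
      rw [inter_eq_right]; intro α hα; exact mem_Iic.mpr (le_trans hα.2.le h1.ge)
    rw [this, Real.volume_Ioo, sub_zero, ← h1]
end quantlemmas

lemma VaR_eq_quant {Ω : Type*} [MeasurableSpace Ω] (P : Measure Ω) [IsProbabilityMeasure P]
    (X : Ω → ℝ) (hX : Measurable X) : VaR P X = quant (P.map X) := by
  have : IsProbabilityMeasure (P.map X) := Measure.isProbabilityMeasure_map hX.aemeasurable
  funext α
  unfold VaR quant
  congr 1
  ext x
  simp only [mem_setOf_eq, cdf_eq_real, measureReal_def, Measure.map_apply hX measurableSet_Iic]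
  rfl


theorem comonotonic_modification_sum_eq {Ω : Type*} [MeasurableSpace Ω]
    (P : Measure Ω) [IsProbabilityMeasure P] (hP : Atomless P)
    {n : ℕ} (X : Fin n → Ω → ℝ) (hmeas : ∀ i, Measurable (X i))
    (hint : ∀ i, Integrable (X i) P)
    (hsub : ∀ α ∈ Set.Ioo (0 : ℝ) 1,
      VaR P (fun ω => ∑ i, X i ω) α ≤ ∑ i, VaR P (X i) α)
    (U : Ω → ℝ) (hU : Measurable U) (hUuni : UniformOn01 P U)
    (hrep : ∀ᵐ ω ∂P, (∑ i, X i ω) = VaR P (fun ω' => ∑ i, X i ω') (U ω)) :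
    ∀ᵐ ω ∂P, (∑ i, VaR P (X i) (U ω)) = ∑ i, X i ω := by
  -- U lands in (0,1) a.e.
  have hU01 : ∀ᵐ ω ∂P, U ω ∈ Ioo (0:ℝ) 1 := by
    have : P (U ⁻¹' (Ioo (0:ℝ) 1)ᶜ) = 0 := by
      rw [← Measure.map_apply hU (measurableSet_Ioo.compl), hUuni,
        Measure.restrict_apply measurableSet_Ioo.compl, compl_inter_self, measure_empty]
    filter_upwards [measure_eq_zero_iff_ae_notMem.mp this] with ω hω
    simpa using hω
  -- transport of law and integrals for each i
  have key : ∀ i, Integrable (fun ω => VaR P (X i) (U ω)) P ∧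
      ∫ ω, VaR P (X i) (U ω) ∂P = ∫ ω, X i ω ∂P := by
    intro i
    set μi := P.map (X i) with hμi
    have hprob : IsProbabilityMeasure μi := Measure.isProbabilityMeasure_map (hmeas i).aemeasurable
    have hVq : VaR P (X i) = quant μi := VaR_eq_quant P (X i) (hmeas i)
    have haeq : AEMeasurable (quant μi) (P.map U) := by
      rw [hUuni]
      exact aemeasurable_restrict_of_monotoneOn measurableSet_Ioo quant_monotoneOn
    have haeqU : AEMeasurable (fun ω => quant μi (U ω)) P :=
      haeq.comp_aemeasurable hU.aemeasurable
    have hmap : P.map (fun ω => quant μi (U ω)) = μi := by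
      have := AEMeasurable.map_map_of_aemeasurable haeq hU.aemeasurable
      rw [hUuni, quant_map_eq] at this
      exact this.symm
    have hid : Integrable (id : ℝ → ℝ) μi := by
      rw [hμi, integrable_map_measure aestronglyMeasurable_id (hmeas i).aemeasurable]
      exact hint i
    have hintq : Integrable (fun ω => quant μi (U ω)) P := by
      have h := (integrable_map_measure (f := fun ω => quant μi (U ω))
        (g := (id : ℝ → ℝ)) (by rw [hmap]; exact aestronglyMeasurable_id) haeqU).mp
      rw [hmap] at h
      exact h hid
    constructor
    · rw [hVq]; exact hintq
    · rw [hVq]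
      have h1 : ∫ ω, quant μi (U ω) ∂P = ∫ x, id x ∂μi := by
        have h := integral_map (μ := P) haeqU (f := (id : ℝ → ℝ))
          (by rw [hmap]; exact aestronglyMeasurable_id)
        rw [hmap] at h
        exact h.symm
      have h2 : ∫ ω, X i ω ∂P = ∫ x, id x ∂μi := by
        rw [hμi, integral_map (hmeas i).aemeasurable aestronglyMeasurable_id]
        rfl
      rw [h1, h2]
  -- a.e. inequality S ≤ ∑ quantile terms
  have hle : (fun ω => ∑ i, X i ω) ≤ᵐ[P] fun ω => ∑ i, VaR P (X i) (U ω) := by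
    filter_upwards [hU01, hrep] with ω h01 hrepω
    rw [hrepω]
    exact hsub (U ω) h01
  -- integrals agree
  have hintsum : Integrable (fun ω => ∑ i, VaR P (X i) (U ω)) P :=
    integrable_finset_sum _ (fun i _ => (key i).1)
  have hintS : Integrable (fun ω => ∑ i, X i ω) P :=
    integrable_finset_sum _ (fun i _ => hint i)
  have hinteq : ∫ ω, (∑ i, X i ω) ∂P = ∫ ω, (∑ i, VaR P (X i) (U ω)) ∂P := by
    rw [integral_finset_sum _ (fun i _ => hint i),
      integral_finset_sum _ (fun i _ => (key i).1)]
    exact Finset.sum_congr rfl (fun i _ => ((key i).2).symm)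
  have := (integral_eq_iff_of_ae_le hintS hintsum hle).mp hinteq
  filter_upwards [this] with ω hω
  exact hω.symm
end

section
/- If X₁, …, Xₙ are integrable random variables such that (X₁, …, Xₙ) is comonotonic, then for any random vector (X̃₁, …, X̃ₙ) with the same marginal distributions (i.e., X̃ᵢ has the same distribution as Xᵢ for each i), the sum ∑ᵢ X̃ᵢ is dominated by ∑ᵢ Xᵢ in the convex order: E[∑ᵢ X̃ᵢ] = E[∑ᵢ Xᵢ] and E[max{∑ᵢ X̃ᵢ − c, 0}] ≤ E[max{∑ᵢ Xᵢ − c, 0}] for every c ∈ ℝ. -/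
open MeasureTheory ProbabilityTheory
open scoped NNReal

section CSOaux
namespace CSO
variable {n : ℕ}




lemma comono_total {A : Set (Fin n → ℝ)} (hA : ComonotonicSet A) {x y : Fin n → ℝ}
    (hx : x ∈ A) (hy : y ∈ A) : (∀ i, x i ≤ y i) ∨ (∀ i, y i ≤ x i) := by
  by_cases h : ∃ i, x i < y i
  · exact Or.inl (hA x hx y hy h)
  · right
    intro j
    by_contra h2
    exact h ⟨j, lt_of_not_ge h2⟩

lemma chain_upper {S : Set (Fin n → ℝ)}
    (hchain : ∀ x ∈ S, ∀ y ∈ S, (∀ i, x i ≤ y i) ∨ (∀ i, y i ≤ x i))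
    (hne : S.Nonempty) (w : Fin n → (Fin n → ℝ)) (hw : ∀ i, w i ∈ S) :
    ∃ z ∈ S, ∀ i, ∀ j, w i j ≤ z j := by
  have key : ∀ s : Finset (Fin n), ∃ z ∈ S, ∀ i ∈ s, ∀ j, w i j ≤ z j := by
    intro s
    induction s using Finset.induction with
    | empty => exact ⟨hne.choose, hne.choose_spec, by simp⟩
    | @insert a s hnotmem ih =>
      obtain ⟨z, hzS, hz⟩ := ih
      rcases hchain z hzS (w a) (hw a) with h | h
      · refine ⟨w a, hw a, ?_⟩
        intro i hi j
        rcases Finset.mem_insert.1 hi with rfl | hi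
        · exact le_rfl
        · exact le_trans (hz i hi j) (h j)
      · refine ⟨z, hzS, ?_⟩
        intro i hi j
        rcases Finset.mem_insert.1 hi with rfl | hi
        · exact h j
        · exact hz i hi j
  obtain ⟨z, hzS, hz⟩ := key Finset.univ
  exact ⟨z, hzS, fun i j => hz i (Finset.mem_univ i) j⟩

lemma chain_lower {S : Set (Fin n → ℝ)}
    (hchain : ∀ x ∈ S, ∀ y ∈ S, (∀ i, x i ≤ y i) ∨ (∀ i, y i ≤ x i))
    (hne : S.Nonempty) (w : Fin n → (Fin n → ℝ)) (hw : ∀ i, w i ∈ S) :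
    ∃ z ∈ S, ∀ i, ∀ j, z j ≤ w i j := by
  have key : ∀ s : Finset (Fin n), ∃ z ∈ S, ∀ i ∈ s, ∀ j, z j ≤ w i j := by
    intro s
    induction s using Finset.induction with
    | empty => exact ⟨hne.choose, hne.choose_spec, by simp⟩
    | @insert a s hnotmem ih =>
      obtain ⟨z, hzS, hz⟩ := ih
      rcases hchain z hzS (w a) (hw a) with h | h
      · refine ⟨z, hzS, ?_⟩
        intro i hi j
        rcases Finset.mem_insert.1 hi with rfl | hi
        · exact h j
        · exact hz i hi j
      · refine ⟨w a, hw a, ?_⟩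
        intro i hi j
        rcases Finset.mem_insert.1 hi with rfl | hi
        · exact le_rfl
        · exact le_trans (h j) (hz i hi j)
  obtain ⟨z, hzS, hz⟩ := key Finset.univ
  exact ⟨z, hzS, fun i j => hz i (Finset.mem_univ i) j⟩

lemma sum_sSup_le {A : Set (Fin n → ℝ)}
    (hchain : ∀ x ∈ A, ∀ y ∈ A, (∀ i, x i ≤ y i) ∨ (∀ i, y i ≤ x i))
    {c : ℝ} (hc : ∀ x ∈ A, ∑ i, x i < c) (hn : 0 < n) (hne : A.Nonempty) :
    ∑ i, sSup ((fun x : Fin n → ℝ => x i) '' A) ≤ c := by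
  set a : Fin n → ℝ := fun i => sSup ((fun x : Fin n → ℝ => x i) '' A) with ha
  by_contra hcon
  push_neg at hcon
  set ε : ℝ := (∑ i, a i - c) / n with hε
  have hεpos : 0 < ε := div_pos (by linarith) (by exact_mod_cast hn)
  have hw : ∀ i, ∃ x ∈ A, a i - ε < x i := by
    intro i
    obtain ⟨v, hv, hlt⟩ := exists_lt_of_lt_csSup (hne.image _) (by linarith : a i - ε < a i)
    obtain ⟨x, hx, rfl⟩ := hv
    exact ⟨x, hx, hlt⟩
  choose w hwA hwlt using hw
  obtain ⟨z, hzA, hz⟩ := chain_upper hchain hne w hwA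
  have h1 : ∑ i, (a i - ε) < ∑ i, z i :=
    Finset.sum_lt_sum_of_nonempty (Finset.univ_nonempty_iff.2 (Fin.pos_iff_nonempty.1 hn))
      (fun i _ => lt_of_lt_of_le (hwlt i) (hz i i))
  have h2 : ∑ i, (a i - ε) = c := by
    rw [Finset.sum_sub_distrib]
    simp [hε]
    field_simp
    ring
  exact absurd (hc z hzA) (by linarith)

lemma le_sum_sInf {A : Set (Fin n → ℝ)}
    (hchain : ∀ x ∈ A, ∀ y ∈ A, (∀ i, x i ≤ y i) ∨ (∀ i, y i ≤ x i))
    {c : ℝ} (hc : ∀ x ∈ A, c ≤ ∑ i, x i) (hn : 0 < n) (hne : A.Nonempty) :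
    c ≤ ∑ i, sInf ((fun x : Fin n → ℝ => x i) '' A) := by
  set b : Fin n → ℝ := fun i => sInf ((fun x : Fin n → ℝ => x i) '' A) with hb
  by_contra hcon
  push_neg at hcon
  set ε : ℝ := (c - ∑ i, b i) / n with hε
  have hεpos : 0 < ε := div_pos (by linarith) (by exact_mod_cast hn)
  have hw : ∀ i, ∃ x ∈ A, x i < b i + ε := by
    intro i
    obtain ⟨v, hv, hlt⟩ := exists_lt_of_csInf_lt (hne.image _) (by linarith : b i < b i + ε)
    obtain ⟨x, hx, rfl⟩ := hv
    exact ⟨x, hx, hlt⟩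
  choose w hwA hwlt using hw
  obtain ⟨z, hzA, hz⟩ := chain_lower hchain hne w hwA
  have h1 : ∑ i, z i < ∑ i, (b i + ε) :=
    Finset.sum_lt_sum_of_nonempty (Finset.univ_nonempty_iff.2 (Fin.pos_iff_nonempty.1 hn))
      (fun i _ => lt_of_le_of_lt (hz i i) (hwlt i))
  have h2 : ∑ i, (b i + ε) = c := by
    rw [Finset.sum_add_distrib]
    simp [hε]
    field_simp
    ring
  exact absurd (hc z hzA) (by linarith)



lemma exists_d (hn : 0 < n) {A : Set (Fin n → ℝ)} (hA : ComonotonicSet A)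
    (hne : A.Nonempty) (c : ℝ) :
    ∃ d : Fin n → ℝ, (∑ i, d i) = c ∧
      (∀ x ∈ A, c ≤ ∑ i, x i → ∀ i, d i ≤ x i) ∧
      (∀ x ∈ A, (∑ i, x i) < c → ∀ i, x i ≤ d i) := by
  classical
  set L : Set (Fin n → ℝ) := {x | x ∈ A ∧ ∑ i, x i < c} with hLdef
  set U : Set (Fin n → ℝ) := {x | x ∈ A ∧ c ≤ ∑ i, x i} with hUdef
  have hchainA : ∀ x ∈ A, ∀ y ∈ A, (∀ i, x i ≤ y i) ∨ (∀ i, y i ≤ x i) :=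
    fun x hx y hy => comono_total hA hx hy
  have hchainL : ∀ x ∈ L, ∀ y ∈ L, (∀ i, x i ≤ y i) ∨ (∀ i, y i ≤ x i) :=
    fun x hx y hy => hchainA x hx.1 y hy.1
  have hchainU : ∀ x ∈ U, ∀ y ∈ U, (∀ i, x i ≤ y i) ∨ (∀ i, y i ≤ x i) :=
    fun x hx y hy => hchainA x hx.1 y hy.1
  have hLU : ∀ x ∈ L, ∀ y ∈ U, ∀ i, x i ≤ y i := by
    intro x hx y hy
    rcases hchainA x hx.1 y hy.1 with h | h
    · exact h
    · have hs : ∑ i, y i ≤ ∑ i, x i := Finset.sum_le_sum (fun i _ => h i)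
      have h1 := hx.2
      have h2 := hy.2
      intro i
      linarith
  have hnr : (0 : ℝ) < n := by exact_mod_cast hn
  by_cases hLne : L.Nonempty
  · by_cases hUne : U.Nonempty
    · -- both nonempty
      obtain ⟨x₀, hx₀⟩ := id hLne
      obtain ⟨y₀, hy₀⟩ := id hUne
      set a : Fin n → ℝ := fun i => sSup ((fun x : Fin n → ℝ => x i) '' L) with hadef
      set b : Fin n → ℝ := fun i => sInf ((fun x : Fin n → ℝ => x i) '' U) with hbdef
      have hBddL : ∀ i, BddAbove ((fun x : Fin n → ℝ => x i) '' L) := by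
        intro i
        refine ⟨y₀ i, ?_⟩
        rintro v ⟨x, hx, rfl⟩
        exact hLU x hx y₀ hy₀ i
      have hBddU : ∀ i, BddBelow ((fun x : Fin n → ℝ => x i) '' U) := by
        intro i
        refine ⟨x₀ i, ?_⟩
        rintro v ⟨y, hy, rfl⟩
        exact hLU x₀ hx₀ y hy i
      have hxa : ∀ x ∈ L, ∀ i, x i ≤ a i :=
        fun x hx i => le_csSup (hBddL i) ⟨x, hx, rfl⟩
      have hby : ∀ y ∈ U, ∀ i, b i ≤ y i :=
        fun y hy i => csInf_le (hBddU i) ⟨y, hy, rfl⟩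
      have hab : ∀ i, a i ≤ b i := by
        intro i
        apply csSup_le (hLne.image _)
        rintro v ⟨x, hx, rfl⟩
        apply le_csInf (hUne.image _)
        rintro u ⟨y, hy, rfl⟩
        exact hLU x hx y hy i
      have hsa : ∑ i, a i ≤ c := sum_sSup_le hchainL (fun x hx => hx.2) hn hLne
      have hsb : c ≤ ∑ i, b i := le_sum_sInf hchainU (fun x hx => hx.2) hn hUne
      by_cases heq : ∑ i, b i = ∑ i, a i
      · -- a = b, and c = ∑ a
        have hzero : ∑ i, (b i - a i) = 0 := by rw [Finset.sum_sub_distrib]; linarith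
        have habe : ∀ i, a i = b i := by
          intro i
          have := (Finset.sum_eq_zero_iff_of_nonneg
            (fun i _ => by linarith [hab i] : ∀ i ∈ Finset.univ, (0:ℝ) ≤ b i - a i)).1 hzero
            i (Finset.mem_univ i)
          linarith
        refine ⟨a, by linarith, ?_, ?_⟩
        · intro x hx hcx i
          rw [habe i]
          exact hby x ⟨hx, hcx⟩ i
        · intro x hx hcx i
          exact hxa x ⟨hx, hcx⟩ i
      · have hlt : ∑ i, a i < ∑ i, b i := lt_of_le_of_ne (by linarith) (Ne.symm heq)
        set lam : ℝ := (c - ∑ i, a i) / (∑ i, b i - ∑ i, a i) with hlam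
        have hlam0 : 0 ≤ lam := div_nonneg (by linarith) (by linarith)
        have hlam1 : lam ≤ 1 := by
          rw [hlam, div_le_one (by linarith)]
          linarith
        refine ⟨fun i => a i + lam * (b i - a i), ?_, ?_, ?_⟩
        · have hne0 : (∑ i, b i - ∑ i, a i) ≠ 0 := sub_ne_zero_of_ne (ne_of_gt hlt)
          rw [Finset.sum_add_distrib, ← Finset.mul_sum, Finset.sum_sub_distrib, hlam,
            div_mul_cancel₀ _ hne0]
          ring
        · intro x hx hcx i
          have h1 : a i + lam * (b i - a i) ≤ b i := by nlinarith [hab i]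
          exact le_trans h1 (hby x ⟨hx, hcx⟩ i)
        · intro x hx hcx i
          have h1 : a i ≤ a i + lam * (b i - a i) := by nlinarith [hab i]
          exact le_trans (hxa x ⟨hx, hcx⟩ i) h1
    · -- U empty : all of A has sum < c
      have hUA : ∀ x ∈ A, ∑ i, x i < c := by
        intro x hx
        by_contra h
        exact hUne ⟨x, hx, not_lt.1 h⟩
      have hLA : L = A := by
        ext x
        exact ⟨fun h => h.1, fun h => ⟨h, hUA x h⟩⟩
      obtain ⟨x₀, hx₀⟩ := id hne
      set a : Fin n → ℝ := fun i => sSup ((fun x : Fin n → ℝ => x i) '' A) with hadef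
      have hBddA : ∀ i, BddAbove ((fun x : Fin n → ℝ => x i) '' A) := by
        intro i
        refine ⟨max (x₀ i) (c - ∑ j ∈ Finset.univ.erase i, x₀ j), ?_⟩
        rintro v ⟨x, hx, rfl⟩
        rcases hchainA x hx x₀ hx₀ with h | h
        · exact le_max_of_le_left (h i)
        · have hle : ∑ j ∈ Finset.univ.erase i, x₀ j ≤ ∑ j ∈ Finset.univ.erase i, x j :=
            Finset.sum_le_sum (fun j _ => h j)
          have hx1 : x i + ∑ j ∈ Finset.univ.erase i, x j = ∑ j, x j :=
            Finset.add_sum_erase _ _ (Finset.mem_univ i)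
          have := hUA x hx
          apply le_max_of_le_right
          linarith
      have hxa : ∀ x ∈ A, ∀ i, x i ≤ a i :=
        fun x hx i => le_csSup (hBddA i) ⟨x, hx, rfl⟩
      have hsa : ∑ i, a i ≤ c := sum_sSup_le hchainA hUA hn hne
      refine ⟨fun i => a i + (c - ∑ j, a j) / n, ?_, ?_, ?_⟩
      · rw [Finset.sum_add_distrib]
        simp
        field_simp
        ring
      · intro x hx hcx
        exact absurd (hUA x hx) (not_lt.2 hcx)
      · intro x hx _ i
        have : (0:ℝ) ≤ (c - ∑ j, a j) / n := div_nonneg (by linarith) (le_of_lt hnr)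
        linarith [hxa x hx i]
  · -- L empty : all of A has sum ≥ c
    have hUA : ∀ x ∈ A, c ≤ ∑ i, x i := by
      intro x hx
      by_contra h
      exact hLne ⟨x, hx, not_le.1 h⟩
    obtain ⟨y₀, hy₀⟩ := id hne
    set b : Fin n → ℝ := fun i => sInf ((fun x : Fin n → ℝ => x i) '' A) with hbdef
    have hBddA : ∀ i, BddBelow ((fun x : Fin n → ℝ => x i) '' A) := by
      intro i
      refine ⟨min (y₀ i) (c - ∑ j ∈ Finset.univ.erase i, y₀ j), ?_⟩
      rintro v ⟨x, hx, rfl⟩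
      rcases hchainA x hx y₀ hy₀ with h | h
      · have hle : ∑ j ∈ Finset.univ.erase i, x j ≤ ∑ j ∈ Finset.univ.erase i, y₀ j :=
          Finset.sum_le_sum (fun j _ => h j)
        have hx1 : x i + ∑ j ∈ Finset.univ.erase i, x j = ∑ j, x j :=
          Finset.add_sum_erase _ _ (Finset.mem_univ i)
        have := hUA x hx
        apply min_le_of_right_le
        linarith
      · exact min_le_of_left_le (h i)
    have hby : ∀ x ∈ A, ∀ i, b i ≤ x i :=
      fun x hx i => csInf_le (hBddA i) ⟨x, hx, rfl⟩
    have hsb : c ≤ ∑ i, b i := le_sum_sInf hchainA hUA hn hne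
    refine ⟨fun i => b i - (∑ j, b j - c) / n, ?_, ?_, ?_⟩
    · rw [Finset.sum_sub_distrib]
      simp
      field_simp
      ring
    · intro x hx _ i
      have : (0:ℝ) ≤ (∑ j, b j - c) / n := div_nonneg (by linarith) (le_of_lt hnr)
      linarith [hby x hx i]
    · intro x hx hcx
      exact absurd (hUA x hx) (not_le.2 hcx)

lemma split_eq {A : Set (Fin n → ℝ)} {c : ℝ} {d : Fin n → ℝ} (hd : (∑ i, d i) = c)
    (hU : ∀ x ∈ A, c ≤ ∑ i, x i → ∀ i, d i ≤ x i)
    (hL : ∀ x ∈ A, (∑ i, x i) < c → ∀ i, x i ≤ d i) :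
    ∀ x ∈ A, max ((∑ i, x i) - c) 0 = ∑ i, max (x i - d i) 0 := by
  intro x hx
  rcases le_or_gt c (∑ i, x i) with h | h
  · rw [max_eq_left (by linarith)]
    rw [Finset.sum_congr rfl (fun i _ => max_eq_left (by linarith [hU x hx h i]))]
    rw [Finset.sum_sub_distrib, hd]
  · rw [max_eq_right (by linarith)]
    exact (Finset.sum_eq_zero (fun i _ => max_eq_right (by linarith [hL x hx h i]))).symm

lemma max_sum_le (c : ℝ) (d : Fin n → ℝ) (hd : (∑ i, d i) = c) (t : Fin n → ℝ) :
    max ((∑ i, t i) - c) 0 ≤ ∑ i, max (t i - d i) 0 := by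
  apply max_le
  · calc (∑ i, t i) - c = ∑ i, (t i - d i) := by rw [Finset.sum_sub_distrib, hd]
    _ ≤ ∑ i, max (t i - d i) 0 := Finset.sum_le_sum (fun i _ => le_max_left _ _)
  · exact Finset.sum_nonneg (fun i _ => le_max_right _ _)

end CSO



lemma isOpen_compl_measSupport {E : Type*} [TopologicalSpace E] [MeasurableSpace E]
    (μ : Measure E) : IsOpen (measSupport μ)ᶜ := by
  rw [isOpen_iff_forall_mem_open]
  intro x hx
  simp only [Set.mem_compl_iff, measSupport, Set.mem_setOf_eq, not_forall] at hx
  obtain ⟨U, hU, hxU, hpos⟩ := hx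
  refine ⟨U, ?_, hU, hxU⟩
  intro y hy
  simp only [Set.mem_compl_iff, measSupport, Set.mem_setOf_eq, not_forall]
  exact ⟨U, hU, hy, hpos⟩

lemma null_compl_measSupport {E : Type*} [TopologicalSpace E] [SecondCountableTopology E]
    [MeasurableSpace E] (μ : Measure E) : μ (measSupport μ)ᶜ = 0 := by
  obtain ⟨B, hBc, hBne, hB⟩ := TopologicalSpace.exists_countable_basis E
  set N : Set (Set E) := {U ∈ B | μ U = 0} with hN
  have hNc : N.Countable := hBc.mono (Set.sep_subset _ _)
  have hsub : (measSupport μ)ᶜ ⊆ ⋃₀ N := by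
    intro x hx
    simp only [Set.mem_compl_iff, measSupport, Set.mem_setOf_eq, not_forall] at hx
    obtain ⟨U, hU, hxU, hpos⟩ := hx
    have hU0 : μ U = 0 := by
      by_contra h
      exact hpos (pos_iff_ne_zero.2 h)
    obtain ⟨V, hVB, hxV, hVU⟩ := hB.mem_nhds_iff.1 (hU.mem_nhds hxU)
    exact ⟨V, ⟨hVB, le_antisymm (le_trans (measure_mono hVU) (le_of_eq hU0)) (zero_le)⟩, hxV⟩
  exact measure_mono_null hsub ((measure_sUnion_null_iff hNc).2 (fun s hs => hs.2))

end CSOaux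

theorem comonotonic_sum_max_convex_order {Ω : Type*} [MeasurableSpace Ω]
    (P : Measure Ω) [IsProbabilityMeasure P]
    {n : ℕ} (X Xt : Fin n → Ω → ℝ)
    (hX : ∀ i, Measurable (X i)) (hXt : ∀ i, Measurable (Xt i))
    (hint : ∀ i, Integrable (X i) P)
    (hmarg : ∀ i, P.map (Xt i) = P.map (X i))
    (hcom : Comonotonic P X) :
    (∫ ω, (∑ i, Xt i ω) ∂P) = (∫ ω, (∑ i, X i ω) ∂P) ∧
    ∀ c : ℝ, (∫ ω, max ((∑ i, Xt i ω) - c) 0 ∂P) ≤ ∫ ω, max ((∑ i, X i ω) - c) 0 ∂P := by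
  classical
  rcases Nat.eq_zero_or_pos n with hn0 | hn
  · subst hn0
    constructor <;> simp
  have hXvec : Measurable (fun ω i => X i ω) := measurable_pi_lambda _ hX
  set μ := P.map (fun ω i => X i ω) with hμ
  set A := measSupport μ with hA
  have hAco : ComonotonicSet A := hcom
  have hAm : MeasurableSet A := (isOpen_compl_measSupport μ).measurableSet.of_compl
  have hAcompl : μ Aᶜ = 0 := null_compl_measSupport μ
  haveI : IsProbabilityMeasure μ := Measure.isProbabilityMeasure_map hXvec.aemeasurable
  have hAne : A.Nonempty := by
    rw [Set.nonempty_iff_ne_empty]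
    intro h
    have h2 := hAcompl
    rw [h, Set.compl_empty, measure_univ] at h2
    exact one_ne_zero h2
  have hmemae : ∀ᵐ ω ∂P, (fun i => X i ω) ∈ A := by
    rw [ae_iff]
    have heq : {ω | ¬ (fun i => X i ω) ∈ A} = (fun ω i => X i ω) ⁻¹' Aᶜ := rfl
    rw [heq, ← Measure.map_apply hXvec hAm.compl]
    exact hAcompl
  have hXtint : ∀ i, Integrable (Xt i) P := by
    intro i
    have h1 : Integrable id (P.map (X i)) :=
      (integrable_map_measure aestronglyMeasurable_id (hX i).aemeasurable).2 (hint i)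
    rw [← hmarg i] at h1
    exact (integrable_map_measure aestronglyMeasurable_id (hXt i).aemeasurable).1 h1
  constructor
  · rw [integral_finset_sum _ (fun i _ => hXtint i), integral_finset_sum _ (fun i _ => hint i)]
    refine Finset.sum_congr rfl (fun i _ => ?_)
    have h1 := integral_map (μ := P) (hXt i).aemeasurable (aestronglyMeasurable_id (α := ℝ))
    have h2 := integral_map (μ := P) (hX i).aemeasurable (aestronglyMeasurable_id (α := ℝ))
    simp only [id_eq] at h1 h2
    rw [← h1, ← h2, hmarg i]
  intro c
  obtain ⟨d, hd, hUb, hLb⟩ := CSO.exists_d hn hAco hAne c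
  have hsplit := CSO.split_eq hd hUb hLb
  have hcont : Continuous (fun t : ℝ => max (t - ( 0:ℝ)) 0) := by fun_prop
  have hgc : ∀ i, Continuous (fun t : ℝ => max (t - d i) 0) :=
    fun i => (continuous_id.sub continuous_const).max continuous_const
  have hXmaxint : ∀ i, Integrable (fun ω => max (X i ω - d i) 0) P :=
    fun i => ((hint i).sub (integrable_const (d i))).pos_part
  have hXtmaxint : ∀ i, Integrable (fun ω => max (Xt i ω - d i) 0) P := by
    intro i
    have h1 : Integrable (fun t : ℝ => max (t - d i) 0) (P.map (X i)) :=
      (integrable_map_measure (hgc i).aestronglyMeasurable (hX i).aemeasurable).2 (hXmaxint i)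
    rw [← hmarg i] at h1
    exact (integrable_map_measure (hgc i).aestronglyMeasurable (hXt i).aemeasurable).1 h1
  have hmax_eq : ∀ i, ∫ ω, max (Xt i ω - d i) 0 ∂P = ∫ ω, max (X i ω - d i) 0 ∂P := by
    intro i
    have h1 := integral_map (μ := P) (hXt i).aemeasurable (hgc i).aestronglyMeasurable
    have h2 := integral_map (μ := P) (hX i).aemeasurable (hgc i).aestronglyMeasurable
    rw [← h1, ← h2, hmarg i]
  calc ∫ ω, max ((∑ i, Xt i ω) - c) 0 ∂P
      ≤ ∫ ω, ∑ i, max (Xt i ω - d i) 0 ∂P := by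
        refine integral_mono_of_nonneg (Filter.Eventually.of_forall fun ω => le_max_right _ _)
          (integrable_finset_sum _ (fun i _ => hXtmaxint i))
          (Filter.Eventually.of_forall fun ω => ?_)
        exact CSO.max_sum_le c d hd (fun i => Xt i ω)
    _ = ∑ i, ∫ ω, max (Xt i ω - d i) 0 ∂P := integral_finset_sum _ (fun i _ => hXtmaxint i)
    _ = ∑ i, ∫ ω, max (X i ω - d i) 0 ∂P := Finset.sum_congr rfl (fun i _ => hmax_eq i)
    _ = ∫ ω, ∑ i, max (X i ω - d i) 0 ∂P := (integral_finset_sum _ (fun i _ => hXmaxint i)).symm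
    _ = ∫ ω, max ((∑ i, X i ω) - c) 0 ∂P := by
        apply integral_congr_ae
        filter_upwards [hmemae] with ω hω
        exact (hsplit _ hω).symm
end
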